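/- arXiv:2112.05745 — 9 statements merged into one kernel-verified Lean document; each statement's English description precedes it below -/
import Mathlib

section
/- Let 𝒳 ⊆ ℝ^p be a nonempty compact set, f : ℝ^p → ℝ^n a continuous map, and 𝒴 = f(𝒳) the reachable set. Let (x_i)_{i≥1} be i.i.d. random variables with common law P_𝒳 satisfying P_𝒳(𝒳) = 1 and the boundary-positivity condition: for every y in the frontier ∂𝒴 of 𝒴 and every r > 0, P_𝒳({x ∈ 𝒳 : f(x) lies in the open ball of center y and radius r}) > 0. Let ε̄ ≥ 0 and let (ε_M)_{M≥1} be a sequence with ε_M ≥ 0 for all M and ε_M → ε̄. Define the random set Ŷ^M := convexHull({f(x_1), …, f(x_M)}) ⊕ closedBall(0, ε_M), where ⊕ is the Minkowski sum. Then, almost surely, the Hausdorff distance d_H(Ŷ^M, convexHull(𝒴) ⊕ closedBall(0, ε̄)) converges to 0 as M → ∞. -/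
/-!
A bounded set lies in the convex hull of its frontier: a line through any of its points leaves it
on both sides. So it suffices that, for every `δ > 0`, the frontier of `f '' 𝒳` is eventually
within `δ` of the first `M` samples. Each ball around a point of a countable dense subset of the
frontier has positive probability, so almost surely it is hit by some sample; hence the frontier
lies in the closure of the samples, and by compactness it is eventually covered by their
`δ`-thickening. Since the samples stay in `f '' 𝒳`, the Hausdorff distance is then at most
`δ + |εs M - εbar|`.
-/

open MeasureTheory ProbabilityTheory Metric Filter Pointwise Set Bornology Topology

theorem csSup_mem_frontier {α : Type*} [ConditionallyCompleteLinearOrder α] [TopologicalSpace α]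
    [OrderTopology α] [DenselyOrdered α] [NoMaxOrder α] {T : Set α} (hne : T.Nonempty)
    (hbdd : BddAbove T) : sSup T ∈ frontier T := by
  refine ⟨csSup_mem_closure hne hbdd, fun hint => ?_⟩
  obtain ⟨u, hu, hsub⟩ :=
    exists_Ico_subset_of_mem_nhds (mem_interior_iff_mem_nhds.1 hint) (exists_gt _)
  obtain ⟨c, hTc, hcu⟩ := exists_between hu
  exact (le_csSup hbdd (hsub ⟨hTc.le, hcu⟩)).not_gt hTc

theorem csInf_mem_frontier {α : Type*} [ConditionallyCompleteLinearOrder α] [TopologicalSpace α]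
    [OrderTopology α] [DenselyOrdered α] [NoMinOrder α] {T : Set α} (hne : T.Nonempty)
    (hbdd : BddBelow T) : sInf T ∈ frontier T :=
  csSup_mem_frontier (α := αᵒᵈ) hne hbdd

theorem Bornology.IsBounded.subset_convexHull_frontier {E : Type*} [NormedAddCommGroup E]
    [NormedSpace ℝ E] [Nontrivial E] {Y : Set E} (hY : IsBounded Y) :
    Y ⊆ convexHull ℝ (frontier Y) := by
  intro x hx
  obtain ⟨v, hv⟩ := exists_norm_eq E zero_le_one
  set φ : ℝ →ᵃ[ℝ] E := AffineMap.lineMap x (x + v)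
  have hφ : Isometry φ := Isometry.of_dist_eq fun s t => by
    simp [φ, dist_lineMap_lineMap, hv]
  have hT : IsBounded (φ ⁻¹' Y) := hφ.antilipschitz.isBounded_preimage hY
  have h0 : (0 : ℝ) ∈ φ ⁻¹' Y := by simpa [φ] using hx
  have hfr : frontier (φ ⁻¹' Y) ⊆ φ ⁻¹' frontier Y := hφ.continuous.frontier_preimage_subset Y
  have hseg : x ∈ segment ℝ (φ (sInf (φ ⁻¹' Y))) (φ (sSup (φ ⁻¹' Y))) := by
    rw [← image_segment, segment_eq_Icc (csInf_le_csSup ⟨0, h0⟩ hT.bddBelow hT.bddAbove)]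
    exact ⟨0, ⟨csInf_le hT.bddBelow h0, le_csSup hT.bddAbove h0⟩, by simp [φ]⟩
  exact segment_subset_convexHull (E := E) (hfr (csInf_mem_frontier ⟨0, h0⟩ hT.bddBelow))
    (hfr (csSup_mem_frontier ⟨0, h0⟩ hT.bddAbove)) hseg

theorem convexHull_subset_add_closedBall_of_frontier_subset {E : Type*} [NormedAddCommGroup E]
    [NormedSpace ℝ E] {Y K : Set E} {δ : ℝ} (hY : IsBounded Y) (hK : K.Nonempty) (hδ : 0 ≤ δ)
    (h : frontier Y ⊆ K + closedBall 0 δ) : convexHull ℝ Y ⊆ convexHull ℝ K + closedBall 0 δ := by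
  rcases subsingleton_or_nontrivial E with hE | hE
  · obtain ⟨k, hk⟩ := hK
    intro y _
    rw [Subsingleton.elim y (k + 0)]
    exact add_mem_add (subset_convexHull ℝ K hk) (mem_closedBall_self hδ)
  · calc convexHull ℝ Y ⊆ convexHull ℝ (frontier Y) :=
          convexHull_min hY.subset_convexHull_frontier (convex_convexHull ℝ _)
      _ ⊆ convexHull ℝ (K + closedBall 0 δ) := convexHull_mono h
      _ = convexHull ℝ K + closedBall 0 δ := by
          rw [convexHull_add, (convex_closedBall 0 δ).convexHull_eq]

theorem IsCompact.eventually_subset_thickening_image_Iio {α : Type*} [PseudoMetricSpace α]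
    {F : Set α} (hF : IsCompact F) {z : ℕ → α} (hz : F ⊆ closure (range z)) {δ : ℝ}
    (hδ : 0 < δ) : ∀ᶠ M in atTop, F ⊆ thickening δ (z '' Iio M) := by
  have hmono : Monotone fun M : ℕ => thickening δ (z '' Iio M) := by
    intro M N hMN
    exact thickening_subset_of_subset δ (image_mono (Iio_subset_Iio hMN))
  have hcover : F ⊆ ⋃ M, thickening δ (z '' Iio M) := fun y hy => by
    obtain ⟨_, ⟨i, rfl⟩, hyi⟩ := Metric.mem_closure_iff.1 (hz hy) δ hδ
    exact mem_iUnion.2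
      ⟨i + 1, mem_thickening_iff.2 ⟨z i, mem_image_of_mem z (Nat.lt_succ_self i), hyi⟩⟩
  obtain ⟨M, hM⟩ := hF.elim_directed_cover _ (fun _ => isOpen_thickening) hcover hmono.directed_le
  exact eventually_atTop.2 ⟨M, fun N hN => hM.trans (hmono hN)⟩

theorem hausdorffDist_le_of_subset_add_closedBall {E : Type*} [SeminormedAddCommGroup E]
    {S T : Set E} {δ : ℝ} (hδ : 0 ≤ δ) (hST : S ⊆ T + closedBall 0 δ)
    (hTS : T ⊆ S + closedBall 0 δ) : hausdorffDist S T ≤ δ := by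
  have key : ∀ {A B : Set E}, A ⊆ B + closedBall 0 δ → ∀ a ∈ A, ∃ b ∈ B, dist a b ≤ δ := by
    rintro A B hAB a ha
    obtain ⟨b, hb, d, hd, rfl⟩ := hAB ha
    exact ⟨b, hb, by simpa [dist_eq_norm] using hd⟩
  exact hausdorffDist_le_of_mem_dist hδ (key hST) (key hTS)

theorem hausdorffDist_add_closedBall_le {E : Type*} [NormedAddCommGroup E] [NormedSpace ℝ E]
    [ProperSpace E] {A B : Set E} {δ r s : ℝ} (hδ : 0 ≤ δ) (hr : 0 ≤ r) (hs : 0 ≤ s)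
    (hAB : A ⊆ B) (hBA : B ⊆ A + closedBall 0 δ) :
    hausdorffDist (A + closedBall 0 r) (B + closedBall 0 s) ≤ δ + |r - s| := by
  set η := δ + |r - s|
  have hη : 0 ≤ η := by positivity
  have ball_le : ∀ {a b c : ℝ}, 0 ≤ b → 0 ≤ c → a ≤ b + c →
      closedBall (0 : E) a ⊆ closedBall 0 b + closedBall 0 c := fun hb hc h => by
    rw [closedBall_add_closedBall hb hc, add_zero]
    exact closedBall_subset_closedBall h
  apply hausdorffDist_le_of_subset_add_closedBall hη
  · calc A + closedBall (0 : E) r ⊆ B + (closedBall 0 s + closedBall 0 η) :=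
          add_subset_add hAB (ball_le hs hη (by linarith [le_abs_self (r - s)]))
      _ = B + closedBall 0 s + closedBall 0 η := (add_assoc _ _ _).symm
  · calc B + closedBall (0 : E) s ⊆ A + (closedBall 0 δ + closedBall 0 s) := by
          rw [← add_assoc]; exact add_subset_add_right hBA
      _ ⊆ A + (closedBall 0 r + closedBall 0 η) := by
          rw [closedBall_add_closedBall hδ hs, add_zero]
          exact add_subset_add_left (ball_le hr hη (by linarith [neg_abs_le (r - s)]))
      _ = A + closedBall 0 r + closedBall 0 η := (add_assoc _ _ _).symm

theorem tendsto_hausdorffDist_add_closedBall {E ι : Type*} [NormedAddCommGroup E]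
    [NormedSpace ℝ E] [ProperSpace E] {l : Filter ι} {A : ι → Set E} {B : Set E} {r : ι → ℝ}
    {r₀ : ℝ} (hr : ∀ i, 0 ≤ r i) (hr₀ : 0 ≤ r₀) (hAB : ∀ i, A i ⊆ B)
    (hBA : ∀ δ > 0, ∀ᶠ i in l, B ⊆ A i + closedBall 0 δ) (hlim : Tendsto r l (𝓝 r₀)) :
    Tendsto (fun i => hausdorffDist (A i + closedBall 0 (r i)) (B + closedBall 0 r₀)) l (𝓝 0) := by
  rw [Metric.tendsto_nhds]
  intro ε hε
  filter_upwards [hBA (ε / 2) (half_pos hε), Metric.tendsto_nhds.1 hlim (ε / 2) (half_pos hε)]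
    with i hBi hri
  rw [Real.dist_eq] at hri
  rw [Real.dist_0_eq_abs, abs_of_nonneg hausdorffDist_nonneg]
  calc _ ≤ ε / 2 + |r i - r₀| :=
        hausdorffDist_add_closedBall_le (half_pos hε).le (hr i) hr₀ (hAB i) hBi
    _ < ε := by linarith

namespace ProbabilityTheory

variable {Ω β : Type*} [MeasurableSpace Ω] {μ : Measure Ω} [MeasurableSpace β] {x : ℕ → Ω → β}
  {P : Measure β} [IsProbabilityMeasure P]

theorem iIndepFun.ae_exists_mem (hindep : iIndepFun x μ) (hmeas : ∀ i, Measurable (x i))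
    (hlaw : ∀ i, μ.map (x i) = P) {E : Set β} (hE : MeasurableSet E) (hpos : 0 < P E) :
    ∀ᵐ ω ∂μ, ∃ i, x i ω ∈ E := by
  have hmiss : ∀ k : ℕ, μ {ω | ∀ i, x i ω ∉ E} ≤ P Eᶜ ^ k := fun k =>
    calc μ {ω | ∀ i, x i ω ∉ E} ≤ μ (⋂ i ∈ Finset.range k, x i ⁻¹' Eᶜ) :=
          measure_mono fun ω hω => mem_iInter₂.2 fun i _ => hω i
      _ = ∏ i ∈ Finset.range k, μ (x i ⁻¹' Eᶜ) :=
          hindep.meas_biInter fun i _ => ⟨Eᶜ, hE.compl, rfl⟩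
      _ = P Eᶜ ^ k := by
          simp_rw [← Measure.map_apply (hmeas _) hE.compl, hlaw, Finset.prod_const,
            Finset.card_range]
  have hlt : P Eᶜ < 1 := by
    rw [prob_compl_eq_one_sub hE]
    exact ENNReal.sub_lt_self ENNReal.one_ne_top one_ne_zero hpos.ne'
  simp only [ae_iff, not_exists]
  exact le_antisymm (ge_of_tendsto' (ENNReal.tendsto_pow_atTop_nhds_zero_of_lt_one hlt) hmiss)
    bot_le

theorem iIndepFun.ae_subset_closure_range {E : Type*} [PseudoMetricSpace E] [MeasurableSpace E]
    [OpensMeasurableSpace E] (hindep : iIndepFun x μ) (hmeas : ∀ i, Measurable (x i))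
    (hlaw : ∀ i, μ.map (x i) = P) {g : β → E} (hg : Measurable g) {S : Set E}
    (hS : TopologicalSpace.IsSeparable S) (hpos : ∀ y ∈ S, ∀ r > 0, 0 < P (g ⁻¹' ball y r)) :
    ∀ᵐ ω ∂μ, S ⊆ closure (range fun i => g (x i ω)) := by
  obtain ⟨c, hcS, hc, hSc⟩ := hS.exists_countable_dense_subset
  have hhit : ∀ᵐ ω ∂μ, ∀ y ∈ c, ∀ k : ℕ, ∃ i, g (x i ω) ∈ ball y (1 / (k + 1)) := by
    refine (ae_ball_iff hc).2 fun y hy => ae_all_iff.2 fun k => ?_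
    exact hindep.ae_exists_mem hmeas hlaw (hg measurableSet_ball)
      (hpos y (hcS hy) _ Nat.one_div_pos_of_nat)
  filter_upwards [hhit] with ω hω
  refine hSc.trans (closure_minimal (fun y hy => Metric.mem_closure_iff.2 fun ε hε => ?_)
    isClosed_closure)
  obtain ⟨k, hk⟩ := exists_nat_one_div_lt hε
  obtain ⟨i, hi⟩ := hω y hy k
  exact ⟨_, mem_range_self i, (mem_ball'.1 hi).trans hk⟩

end ProbabilityTheory

theorem randup_asymptotic_convergence_general {p n : ℕ}
    (𝒳 : Set (EuclideanSpace ℝ (Fin p))) (h𝒳c : IsCompact 𝒳)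
    (f : EuclideanSpace ℝ (Fin p) → EuclideanSpace ℝ (Fin n)) (hf : Continuous f)
    {Ω : Type*} [MeasureSpace Ω]
    (x : ℕ → Ω → EuclideanSpace ℝ (Fin p)) (hxmeas : ∀ i, Measurable (x i))
    (P𝒳 : Measure (EuclideanSpace ℝ (Fin p))) [IsProbabilityMeasure P𝒳]
    (hlaw : ∀ i, Measure.map (x i) ℙ = P𝒳)
    (hindep : iIndepFun x ℙ)
    (hsupp : P𝒳 𝒳 = 1)
    (hbd : ∀ y ∈ frontier (f '' 𝒳), ∀ r > 0,
      0 < P𝒳 {x' ∈ 𝒳 | f x' ∈ Metric.ball y r})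
    (εbar : ℝ) (hεbar : 0 ≤ εbar)
    (εs : ℕ → ℝ) (hεs : ∀ M, 0 ≤ εs M)
    (hεlim : Tendsto εs atTop (nhds εbar)) :
    ∀ᵐ ω ∂ℙ, Tendsto (fun M : ℕ =>
        Metric.hausdorffDist
          (convexHull ℝ ((fun i => f (x i ω)) '' Set.Iio M) + Metric.closedBall (0 : EuclideanSpace ℝ (Fin n)) (εs M))
          (convexHull ℝ (f '' 𝒳) + Metric.closedBall (0 : EuclideanSpace ℝ (Fin n)) εbar))
      atTop (nhds 0) := by
  have hY : IsCompact (f '' 𝒳) := h𝒳c.image hf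
  have hfr : IsCompact (frontier (f '' 𝒳)) :=
    hY.of_isClosed_subset isClosed_frontier hY.isClosed.frontier_subset
  have hsamples : ∀ᵐ ω ∂ℙ, ∀ i, x i ω ∈ 𝒳 := ae_all_iff.2 fun i =>
    ae_of_ae_map (hxmeas i).aemeasurable <| by
      rw [hlaw i, ae_mem_iff_measure_eq h𝒳c.isClosed.measurableSet.nullMeasurableSet, hsupp,
        measure_univ]
  have hdense : ∀ᵐ ω ∂ℙ, frontier (f '' 𝒳) ⊆ closure (range fun i => f (x i ω)) :=
    hindep.ae_subset_closure_range hxmeas hlaw hf.measurable hfr.isSeparable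
      fun y hy r hr => (hbd y hy r hr).trans_le (measure_mono fun _ h => h.2)
  filter_upwards [hsamples, hdense] with ω hω hωfr
  refine tendsto_hausdorffDist_add_closedBall hεs hεbar
    (fun M => convexHull_mono (image_subset_iff.2 fun i _ => mem_image_of_mem f (hω i)))
    (fun δ hδ => ?_) hεlim
  filter_upwards [hfr.eventually_subset_thickening_image_Iio hωfr hδ, eventually_gt_atTop 0]
    with M hM hM0
  refine convexHull_subset_add_closedBall_of_frontier_subset hY.isBounded
    ⟨_, mem_image_of_mem _ (mem_Iio.2 hM0)⟩ hδ.le (hM.trans ?_)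
  rw [← add_ball_zero]
  exact add_subset_add_left ball_subset_closedBall

/-- **Asymptotic convergence of ε-RandUP** (Theorem 1).
If `𝒳 ⊆ ℝ^p` is nonempty compact, `f` continuous, the i.i.d. samples have law `P𝒳`
supported on `𝒳` satisfying the boundary-positivity condition, and `εs M → εbar`,
then almost surely the Hausdorff distance between the padded convex hull of the first
`M` output samples and `convexHull (f '' 𝒳) ⊕ closedBall 0 εbar` tends to `0`. -/
theorem randup_asymptotic_convergence {p n : ℕ}
    (𝒳 : Set (EuclideanSpace ℝ (Fin p))) (h𝒳ne : 𝒳.Nonempty) (h𝒳c : IsCompact 𝒳)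
    (f : EuclideanSpace ℝ (Fin p) → EuclideanSpace ℝ (Fin n)) (hf : Continuous f)
    {Ω : Type*} [MeasureSpace Ω] [IsProbabilityMeasure (ℙ : Measure Ω)]
    (x : ℕ → Ω → EuclideanSpace ℝ (Fin p)) (hxmeas : ∀ i, Measurable (x i))
    (P𝒳 : Measure (EuclideanSpace ℝ (Fin p))) [IsProbabilityMeasure P𝒳]
    (hlaw : ∀ i, Measure.map (x i) ℙ = P𝒳)
    (hindep : iIndepFun x ℙ)
    (hsupp : P𝒳 𝒳 = 1)
    (hbd : ∀ y ∈ frontier (f '' 𝒳), ∀ r > 0,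
      0 < P𝒳 {x' ∈ 𝒳 | f x' ∈ Metric.ball y r})
    (εbar : ℝ) (hεbar : 0 ≤ εbar)
    (εs : ℕ → ℝ) (hεs : ∀ M, 0 ≤ εs M)
    (hεlim : Tendsto εs atTop (nhds εbar)) :
    ∀ᵐ ω ∂ℙ, Tendsto (fun M : ℕ =>
        Metric.hausdorffDist
          (convexHull ℝ ((fun i => f (x i ω)) '' Set.Iio M) + Metric.closedBall (0 : EuclideanSpace ℝ (Fin n)) (εs M))
          (convexHull ℝ (f '' 𝒳) + Metric.closedBall (0 : EuclideanSpace ℝ (Fin n)) εbar))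
      atTop (nhds 0) :=
  randup_asymptotic_convergence_general 𝒳 h𝒳c f hf x hxmeas P𝒳 hlaw hindep hsupp hbd εbar hεbar εs
    hεs hεlim
end

section
/- Let 𝒳 ⊆ ℝ^p be nonempty compact, f : ℝ^p → ℝ^n be L-Lipschitz on 𝒳 with L > 0, and 𝒴 = f(𝒳); assume the frontier ∂𝒴 is contained in f(∂𝒳). Let ε > 0, and suppose the frontier ∂𝒳 can be covered by N closed balls of radius ε/(2L) centered at points of ∂𝒳. Let x_1, …, x_M be i.i.d. random variables with common law P_𝒳 satisfying P_𝒳(𝒳) = 1 and P_𝒳(closedBall(x, ε/(2L))) ≥ Λ for all x ∈ ∂𝒳, for some Λ > 0. Set y_i = f(x_i) and Ŷ^M = convexHull({y_1, …, y_M}). Then, with probability at least 1 − N·(1 − Λ)^M, the Hausdorff distance satisfies d_H(Ŷ^M, convexHull(𝒴)) ≤ ε. -/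
/-!
A compact set in a nontrivial vector space lies in the convex hull of its frontier: the line
through a point `y` leaves the set in both directions, and the two last points of the set on it
are frontier points with `y` between them. Hence `conv 𝒴 = conv ∂𝒴 ⊆ conv f(∂𝒳)`, and if every
point of `∂𝒳` lies within `ε / L` of a sample, the Lipschitz bound puts `f(∂𝒳)`, and so
`conv 𝒴`, inside the closed `ε`-thickening of the convex sample hull. This happens unless some
covering ball is missed by all `M` samples, which has probability at most `(1 - Λ) ^ M` per ball.
-/

open MeasureTheory ProbabilityTheory Metric Filter Set

open scoped NNReal

section Frontier

variable {E : Type*} [AddCommGroup E] [Module ℝ E] [TopologicalSpace E] [IsTopologicalAddGroup E]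
  [ContinuousSMul ℝ E] [T2Space E]

theorem IsCompact.exists_add_smul_mem_frontier {s : Set E} (hs : IsCompact s) {y : E}
    (hy : y ∈ s) {e : E} (he : e ≠ 0) : ∃ t : ℝ, 0 ≤ t ∧ y + t • e ∈ frontier s := by
  set K := (fun t : ℝ => y + t • e) ⁻¹' s
  have hK : IsCompact K :=
    (isClosedEmbedding_smul_left he).isCompact_preimage
      ((Homeomorph.addLeft y).isCompact_preimage.2 hs)
  have h0 : (0 : ℝ) ∈ K := by simpa [K] using hy
  have hsup : sSup K ∈ K := hK.sSup_mem ⟨0, h0⟩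
  have hline : Continuous fun t : ℝ => y + t • e := by fun_prop
  refine ⟨sSup K, le_csSup hK.bddAbove h0, hline.frontier_preimage_subset s ?_⟩
  rw [mem_frontier_iff_notMem_interior hsup, mem_interior_iff_mem_nhds]
  intro hnhds
  obtain ⟨u, hu, huK⟩ := Filter.Eventually.exists_gt (p := (· ∈ K)) hnhds
  exact (le_csSup hK.bddAbove huK).not_gt hu

theorem IsCompact.subset_convexHull_frontier [Nontrivial E] {s : Set E} (hs : IsCompact s) :
    s ⊆ convexHull ℝ (frontier s) := by
  intro y hy
  obtain ⟨e, he⟩ := exists_ne (0 : E)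
  obtain ⟨t₁, ht₁, h₁⟩ := hs.exists_add_smul_mem_frontier hy he
  obtain ⟨t₂, ht₂, h₂⟩ := hs.exists_add_smul_mem_frontier hy (neg_ne_zero.2 he)
  refine segment_subset_convexHull h₁ h₂ (mem_segment_iff_sameRay.2 ?_)
  simpa using (SameRay.sameRay_nonneg_smul_right (R := ℝ) (-e) ht₂).nonneg_smul_left ht₁

end Frontier

theorem infDist_eq_zero_of_subsingleton {F : Type*} [PseudoMetricSpace F] [Subsingleton F]
    (x : F) (s : Set F) : infDist x s = 0 := by
  rcases s.eq_empty_or_nonempty with rfl | ⟨y, hy⟩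
  · exact infDist_empty
  · exact Subsingleton.elim x y ▸ infDist_zero_of_mem hy

theorem hausdorffDist_convexHull_range_le {X F ι : Type*} [MetricSpace X] [NormedAddCommGroup F]
    [NormedSpace ℝ F] {s : Set X} (hs : IsCompact s) {f : X → F} {K : ℝ≥0}
    (hf : LipschitzOnWith K f s) (hbd : frontier (f '' s) ⊆ f '' frontier s) {δ : ℝ}
    (hδ : 0 ≤ δ) {z : ι → X} (hz : ∀ j, z j ∈ s)
    (hnet : ∀ x ∈ frontier s, ∃ j, dist x (z j) ≤ δ) :
    hausdorffDist (convexHull ℝ (range fun j => f (z j))) (convexHull ℝ (f '' s)) ≤ K * δ := by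
  set S := convexHull ℝ (range fun j => f (z j))
  have hST : S ⊆ convexHull ℝ (f '' s) :=
    convexHull_mono (range_subset_iff.2 fun j => mem_image_of_mem f (hz j))
  refine hausdorffDist_le_of_infDist (by positivity)
    (fun u hu => (infDist_zero_of_mem (hST hu)).trans_le (by positivity)) ?_
  rcases subsingleton_or_nontrivial F with hF | hF
  · exact fun v _ => (infDist_eq_zero_of_subsingleton v S).trans_le (by positivity)
  have hconv : Convex ℝ (cthickening (K * δ) S) := (convex_convexHull ℝ _).cthickening _
  have hfr : f '' frontier s ⊆ cthickening (K * δ) S := by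
    rintro _ ⟨x, hx, rfl⟩
    obtain ⟨j, hj⟩ := hnet x hx
    have hfx : dist (f x) (f (z j)) ≤ K * δ :=
      (hf.dist_le_mul x (hs.isClosed.frontier_subset hx) (z j) (hz j)).trans (by gcongr)
    exact mem_cthickening_of_dist_le _ _ _ _ (subset_convexHull ℝ _ (mem_range_self j)) hfx
  have hT : convexHull ℝ (f '' s) ⊆ cthickening (K * δ) S :=
    convexHull_min ((hs.image_of_continuousOn hf.continuousOn).subset_convexHull_frontier.trans
      (convexHull_min (hbd.trans hfr) hconv)) hconv
  intro v hv
  exact ENNReal.toReal_le_of_le_ofReal (by positivity) (mem_cthickening_iff.1 (hT hv))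

section Sampling

variable {Ω ι E : Type*} [MeasurableSpace Ω] [MeasurableSpace E] {μ : Measure Ω}
  {ν : Measure E} {x : ι → Ω → E}

theorem measure_forall_notMem_eq [Fintype ι] (hx : ∀ j, Measurable (x j))
    (hind : iIndepFun x μ) (hlaw : ∀ j, μ.map (x j) = ν) {t : Set E} (ht : MeasurableSet t) :
    μ {ω | ∀ j, x j ω ∉ t} = ν tᶜ ^ Fintype.card ι := by
  have hmiss : {ω | ∀ j, x j ω ∉ t} = ⋂ j, x j ⁻¹' tᶜ := by ext; simp
  rw [hmiss, hind.meas_iInter fun j => ⟨tᶜ, ht.compl, rfl⟩, ← Finset.card_univ,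
    ← Finset.prod_const]
  exact Finset.prod_congr rfl fun j _ => by rw [← Measure.map_apply (hx j) ht.compl, hlaw j]

theorem ofReal_le_measure_forall_exists_mem [IsProbabilityMeasure μ] [IsProbabilityMeasure ν]
    [Fintype ι] {κ : Type*} [Fintype κ] (hx : ∀ j, Measurable (x j)) (hind : iIndepFun x μ)
    (hlaw : ∀ j, μ.map (x j) = ν) {s : κ → Set E} (hs : ∀ i, MeasurableSet (s i)) {Λ : ℝ}
    (hΛ : ∀ i, Λ ≤ ν.real (s i)) :
    ENNReal.ofReal (1 - Fintype.card κ * (1 - Λ) ^ Fintype.card ι) ≤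
      μ {ω | ∀ i, ∃ j, x j ω ∈ s i} := by
  have hmiss (i : κ) : μ.real {ω | ∀ j, x j ω ∉ s i} ≤ (1 - Λ) ^ Fintype.card ι := by
    rw [measureReal_def, measure_forall_notMem_eq hx hind hlaw (hs i), ENNReal.toReal_pow,
      ← measureReal_def, probReal_compl_eq_one_sub (hs i)]
    exact pow_le_pow_left₀ (sub_nonneg.2 measureReal_le_one) (by linarith [hΛ i]) _
  have hmeas : MeasurableSet {ω | ∀ i, ∃ j, x j ω ∈ s i} := by
    simp only [ofPred_forall, ofPred_exists]
    exact .iInter fun i => .iUnion fun j => hx j (hs i)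
  have hbad : {ω | ∀ i, ∃ j, x j ω ∈ s i}ᶜ = ⋃ i, {ω | ∀ j, x j ω ∉ s i} := by ext; simp
  rw [← ofReal_measureReal]
  gcongr
  calc 1 - Fintype.card κ * (1 - Λ) ^ Fintype.card ι
      = 1 - ∑ _i : κ, (1 - Λ) ^ Fintype.card ι := by simp
    _ ≤ 1 - ∑ i, μ.real {ω | ∀ j, x j ω ∉ s i} := by gcongr with i; exact hmiss i
    _ ≤ 1 - μ.real (⋃ i, {ω | ∀ j, x j ω ∉ s i}) := by
      gcongr; exact measureReal_iUnion_fintype_le _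
    _ = μ.real {ω | ∀ i, ∃ j, x j ω ∈ s i} := by
      rw [← hbad, probReal_compl_eq_one_sub hmeas, sub_sub_cancel]

end Sampling

theorem randup_finite_sample_hausdorff_general {p n M N : ℕ}
    (𝒳 : Set (EuclideanSpace ℝ (Fin p))) (h𝒳c : IsCompact 𝒳)
    (f : EuclideanSpace ℝ (Fin p) → EuclideanSpace ℝ (Fin n))
    (L : ℝ) (hL : 0 < L)
    (hf : ∀ x₁ ∈ 𝒳, ∀ x₂ ∈ 𝒳, ‖f x₁ - f x₂‖ ≤ L * ‖x₁ - x₂‖)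
    (hbd : frontier (f '' 𝒳) ⊆ f '' frontier 𝒳)
    (ε : ℝ) (hε : 0 < ε)
    (a : Fin N → EuclideanSpace ℝ (Fin p)) (ha : ∀ i, a i ∈ frontier 𝒳)
    (hcov : frontier 𝒳 ⊆ ⋃ i, Metric.closedBall (a i) (ε / (2 * L)))
    {Ω : Type*} [MeasureSpace Ω] [IsProbabilityMeasure (ℙ : Measure Ω)]
    (x : Fin M → Ω → EuclideanSpace ℝ (Fin p)) (hxmeas : ∀ i, Measurable (x i))
    (P𝒳 : Measure (EuclideanSpace ℝ (Fin p))) [IsProbabilityMeasure P𝒳]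
    (hlaw : ∀ i, Measure.map (x i) ℙ = P𝒳)
    (hindep : iIndepFun x ℙ)
    (hsupp : P𝒳 𝒳 = 1)
    (Λ : ℝ)
    (hball : ∀ x' ∈ frontier 𝒳, ENNReal.ofReal Λ ≤ P𝒳 (Metric.closedBall x' (ε / (2 * L)))) :
    ENNReal.ofReal (1 - N * (1 - Λ) ^ M) ≤
      ℙ {ω | Metric.hausdorffDist
          (convexHull ℝ (Set.range fun i => f (x i ω)))
          (convexHull ℝ (f '' 𝒳)) ≤ ε} := by
  set r := ε / (2 * L) with hr
  have hLip : LipschitzOnWith (Real.toNNReal L) f 𝒳 := LipschitzOnWith.of_dist_le_mul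
    fun x₁ h₁ x₂ h₂ => by simpa [dist_eq_norm, hL.le] using hf x₁ h₁ x₂ h₂
  have hΛ (i : Fin N) : Λ ≤ P𝒳.real (closedBall (a i) r) :=
    (ENNReal.ofReal_le_iff_le_toReal (measure_ne_top _ _)).1 (hball _ (ha i))
  have hmem : ∀ᵐ ω ∂ℙ, ∀ j, x j ω ∈ 𝒳 := ae_all_iff.2 fun j =>
    ae_of_ae_map (hxmeas j).aemeasurable <| by
      rw [hlaw j]; exact (mem_ae_iff_prob_eq_one h𝒳c.isClosed.measurableSet).2 hsupp
  have hgood : {ω | ∀ i, ∃ j, x j ω ∈ closedBall (a i) r} ≤ᵐ[ℙ] {ω | hausdorffDist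
      (convexHull ℝ (range fun i => f (x i ω))) (convexHull ℝ (f '' 𝒳)) ≤ ε} := by
    filter_upwards [hmem] with ω hω hcover
    have hnet : ∀ x' ∈ frontier 𝒳, ∃ j, dist x' (x j ω) ≤ r + r := fun x' hx' => by
      obtain ⟨i, hi⟩ := mem_iUnion.1 (hcov hx')
      obtain ⟨j, hj⟩ := hcover i
      exact ⟨j, (dist_triangle_right _ _ (a i)).trans (add_le_add hi hj)⟩
    have hLr : (Real.toNNReal L : ℝ) * (r + r) = ε := by
      rw [Real.coe_toNNReal _ hL.le, hr]; field_simp; ring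
    exact hLr ▸ hausdorffDist_convexHull_range_le h𝒳c hLip hbd (by positivity) hω hnet
  calc ENNReal.ofReal (1 - N * (1 - Λ) ^ M)
      ≤ ℙ {ω | ∀ i, ∃ j, x j ω ∈ closedBall (a i) r} := by
        simpa using ofReal_le_measure_forall_exists_mem hxmeas hindep hlaw
          (fun _ => measurableSet_closedBall) hΛ
    _ ≤ _ := measure_mono_ae hgood

/-- **Finite-sample Hausdorff bound** (Theorem 2, first conclusion).
With probability at least `1 - N·(1 - Λ)^M`, the Hausdorff distance between the convex
hull of the output samples and the convex hull of the true reachable set is at most `ε`. -/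
theorem randup_finite_sample_hausdorff {p n M N : ℕ}
    (𝒳 : Set (EuclideanSpace ℝ (Fin p))) (h𝒳ne : 𝒳.Nonempty) (h𝒳c : IsCompact 𝒳)
    (f : EuclideanSpace ℝ (Fin p) → EuclideanSpace ℝ (Fin n))
    (L : ℝ) (hL : 0 < L)
    (hf : ∀ x₁ ∈ 𝒳, ∀ x₂ ∈ 𝒳, ‖f x₁ - f x₂‖ ≤ L * ‖x₁ - x₂‖)
    (hbd : frontier (f '' 𝒳) ⊆ f '' frontier 𝒳)
    (ε : ℝ) (hε : 0 < ε)
    (a : Fin N → EuclideanSpace ℝ (Fin p)) (ha : ∀ i, a i ∈ frontier 𝒳)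
    (hcov : frontier 𝒳 ⊆ ⋃ i, Metric.closedBall (a i) (ε / (2 * L)))
    {Ω : Type*} [MeasureSpace Ω] [IsProbabilityMeasure (ℙ : Measure Ω)]
    (x : Fin M → Ω → EuclideanSpace ℝ (Fin p)) (hxmeas : ∀ i, Measurable (x i))
    (P𝒳 : Measure (EuclideanSpace ℝ (Fin p))) [IsProbabilityMeasure P𝒳]
    (hlaw : ∀ i, Measure.map (x i) ℙ = P𝒳)
    (hindep : iIndepFun x ℙ)
    (hsupp : P𝒳 𝒳 = 1)
    (Λ : ℝ) (hΛ : 0 < Λ)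
    (hball : ∀ x' ∈ frontier 𝒳, ENNReal.ofReal Λ ≤ P𝒳 (Metric.closedBall x' (ε / (2 * L)))) :
    ENNReal.ofReal (1 - N * (1 - Λ) ^ M) ≤
      ℙ {ω | Metric.hausdorffDist
          (convexHull ℝ (Set.range fun i => f (x i ω)))
          (convexHull ℝ (f '' 𝒳)) ≤ ε} :=
  randup_finite_sample_hausdorff_general 𝒳 h𝒳c f L hL hf hbd ε hε a ha hcov x hxmeas P𝒳 hlaw hindep
    hsupp Λ hball
end

section
/- Let 𝒳 ⊆ ℝ^p be nonempty compact, f : ℝ^p → ℝ^n be L-Lipschitz on 𝒳 with L > 0, and 𝒴 = f(𝒳); assume ∂𝒴 ⊆ f(∂𝒳). Suppose the complement of 𝒳 is r-convex for some r > 0, i.e., for every x ∈ ∂𝒳 there exists x̃ with x ∈ closedBall(x̃, r) ⊆ 𝒳. Let x_1, …, x_M be i.i.d. random variables with common law P_𝒳 satisfying P_𝒳(𝒳) = 1 and the density lower bound P_𝒳(A) ≥ p₀·λ(A) for every measurable A ⊆ 𝒳, where p₀ > 0 and λ is Lebesgue measure on ℝ^p. Let ε > 0, let r⃗ = (r, 0,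 …, 0) ∈ ℝ^p, set Λ = λ(closedBall(0, ε/(2L)) ∩ closedBall(r⃗, r)), and suppose ∂𝒳 can be covered by N closed balls of radius ε/(2L) centered at points of ∂𝒳. Set y_i = f(x_i) and Ŷ^M = convexHull({y_1, …, y_M}). Then, with probability at least 1 − N·(1 − p₀Λ)^M, both d_H(Ŷ^M, convexHull(𝒴)) ≤ ε and 𝒴 ⊆ Ŷ^M ⊕ closedBall(0, ε) hold. -/
/-!
By `r`-convexity every covering ball `closedBall (a i) (ε / (2L))` contains the intersection of
a ball of radius `ε / (2L)` with a ball of radius `r` whose centre lies within `r`. The volume of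
such an intersection only decreases as the two centres move apart (reflect the excess across the
perpendicular bisector of the centres), so the ball has `P𝒳`-mass at least `p₀Λ`, and all `M`
samples miss it with probability at most `(1 - p₀Λ)^M`. Off the union of these `N` events every
ball holds a sample, so by the Lipschitz bound every point of `f(∂𝒳) ⊇ ∂𝒴` is `ε`-close to
`Ŷ^M`. Finally, a bounded set whose frontier lies in the convex set `Ŷ^M ⊕ closedBall 0 ε` lies in
it entirely: the ray from a point of the convex set through any point of the bounded set leaves
the latter through its frontier.
-/

open MeasureTheory ProbabilityTheory Metric Pointwise Set
open scoped RealInnerProductSpace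

theorem MeasureTheory.MeasurePreserving.measure_le_of_sdiff_subset_preimage {α : Type*}
    [MeasurableSpace α] {μ : Measure α} {σ : α → α} (hσ : MeasurePreserving σ μ μ)
    {s t : Set α} (hs : MeasurableSet s) (ht : MeasurableSet t) (h : s \ t ⊆ σ ⁻¹' (t \ s)) :
    μ s ≤ μ t :=
  calc μ s = μ (t ∩ s) + μ (s \ t) := by rw [Set.inter_comm, measure_inter_add_sdiff s ht]
    _ ≤ μ (t ∩ s) + μ (t \ s) :=
      add_le_add le_rfl ((measure_mono h).trans (hσ.measure_preimage_le _))
    _ = μ t := measure_inter_add_sdiff t hs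

section Lens

variable {E : Type*} [NormedAddCommGroup E] [InnerProductSpace ℝ E] [FiniteDimensional ℝ E]
  [MeasurableSpace E] [BorelSpace E]

theorem volume_closedBall_inter_closedBall_eq_of_dist_eq {a b c d : E} (h : dist a b = dist c d)
    (δ r : ℝ) :
    volume (closedBall a δ ∩ closedBall b r) = volume (closedBall c δ ∩ closedBall d r) := by
  have hnorm : ‖d - c‖ = ‖b - a‖ := by rw [← dist_eq_norm', ← dist_eq_norm', h]
  set ρ := Submodule.reflection (ℝ ∙ (d - c - (b - a)))ᗮ
  have hρ : ρ (d - c) = b - a := Submodule.reflection_sub hnorm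
  have hg : MeasurePreserving (fun x => a + ρ (x - c)) :=
    (measurePreserving_add_left volume a).comp
      (ρ.measurePreserving.comp (measurePreserving_sub_right volume c))
  rw [← hg.measure_preimage
    (measurableSet_closedBall.inter measurableSet_closedBall).nullMeasurableSet]
  congr 1
  ext x
  have hb : a + ρ (x - c) - b = ρ (x - d) := by
    rw [show x - d = (x - c) - (d - c) by abel, map_sub ρ (x - c), hρ]; abel
  simp only [Set.mem_preimage, Set.mem_inter_iff, mem_closedBall, dist_eq_norm,
    add_sub_cancel_left]
  rw [hb, ρ.norm_map, ρ.norm_map]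

theorem volume_closedBall_inter_closedBall_smul_le {e : E} (he : ‖e‖ = 1) {d d' : ℝ}
    (hd : 0 ≤ d) (hdd' : d ≤ d') (δ r : ℝ) :
    volume (closedBall 0 δ ∩ closedBall (d' • e) r) ≤
      volume (closedBall 0 δ ∩ closedBall (d • e) r) := by
  set ρ := Submodule.reflection (ℝ ∙ e)ᗮ
  -- `σ` is the reflection in the hyperplane `⟪x, e⟫ = (d + d') / 2`, which swaps the two centres.
  set σ : E → E := fun x => (d + d') • e + ρ x
  have hσ : MeasurePreserving σ := (measurePreserving_add_left volume _).comp ρ.measurePreserving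
  have hρe : ρ e = -e := Submodule.reflection_orthogonalComplement_singleton_eq_neg e
  have hdist : ∀ x y, dist (σ x) (σ y) = dist x y := fun x y => by
    simp only [σ, dist_add_left, LinearIsometryEquiv.dist_map]
  have hσd' : σ (d' • e) = d • e := by simp only [σ, map_smul, hρe]; module
  have hσd : σ (d • e) = d' • e := by simp only [σ, map_smul, hρe]; module
  have hnorm : ∀ x, dist x (d' • e) < dist x (d • e) → ‖σ x‖ ≤ ‖x‖ := fun x hx => by
    have hinner : ⟪e, ρ x⟫ = -⟪e, x⟫ :=
      calc ⟪e, ρ x⟫ = ⟪ρ (-e), ρ x⟫ := by rw [map_neg, hρe, neg_neg]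
        _ = -⟪e, x⟫ := by rw [ρ.inner_map_map, inner_neg_left]
    have hσx : ‖σ x‖ ^ 2 = ‖x‖ ^ 2 + (d + d') * (d + d' - 2 * ⟪e, x⟫) := by
      simp only [σ]
      rw [norm_add_sq_real, inner_smul_left, hinner, norm_smul, he, ρ.norm_map,
        Real.norm_eq_abs, mul_one, sq_abs]
      simp only [RCLike.conj_to_real]
      ring
    have hdist_sq : ∀ c : ℝ, dist x (c • e) ^ 2 = ‖x‖ ^ 2 - 2 * c * ⟪e, x⟫ + c ^ 2 := by
      intro c
      rw [dist_eq_norm, norm_sub_sq_real, real_inner_smul_right, real_inner_comm, norm_smul, he,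
        Real.norm_eq_abs, mul_one, sq_abs]
      ring
    have hlt := pow_lt_pow_left₀ hx dist_nonneg two_ne_zero
    rw [hdist_sq, hdist_sq] at hlt
    have hside : d + d' - 2 * ⟪e, x⟫ < 0 := by nlinarith
    rw [← pow_le_pow_iff_left₀ (norm_nonneg _) (norm_nonneg _) two_ne_zero, hσx]
    nlinarith
  refine hσ.measure_le_of_sdiff_subset_preimage
    (measurableSet_closedBall.inter measurableSet_closedBall)
    (measurableSet_closedBall.inter measurableSet_closedBall) ?_
  rintro x ⟨⟨hx0, hxd'⟩, hxd⟩
  have hxd : r < dist x (d • e) := by simpa [hx0] using hxd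
  rw [mem_closedBall] at hxd'
  refine ⟨⟨?_, ?_⟩, fun hσx => ?_⟩
  · rw [mem_closedBall_zero_iff] at hx0 ⊢
    exact (hnorm x (hxd'.trans_lt hxd)).trans hx0
  · rwa [mem_closedBall, ← hσd', hdist]
  · have := hσx.2
    rw [mem_closedBall, ← hσd, hdist] at this
    linarith

theorem volume_closedBall_inter_closedBall_le_of_dist_le {a b c d : E}
    (h : dist c d ≤ dist a b) (δ r : ℝ) :
    volume (closedBall a δ ∩ closedBall b r) ≤ volume (closedBall c δ ∩ closedBall d r) := by
  rcases eq_or_ne a b with rfl | hab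
  · rw [volume_closedBall_inter_closedBall_eq_of_dist_eq (h.antisymm (by simp) |>.symm)]
  set e := ‖b - a‖⁻¹ • (b - a)
  have he : ‖e‖ = 1 := norm_smul_inv_norm (sub_ne_zero.2 hab.symm)
  have hdist (t : ℝ) (ht : 0 ≤ t) : dist 0 (t • e) = t := by
    rw [dist_zero_left, norm_smul, he, mul_one, Real.norm_of_nonneg ht]
  rw [volume_closedBall_inter_closedBall_eq_of_dist_eq (hdist _ dist_nonneg).symm,
    volume_closedBall_inter_closedBall_eq_of_dist_eq (hdist (dist c d) dist_nonneg).symm]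
  exact volume_closedBall_inter_closedBall_smul_le he dist_nonneg h δ r

theorem ofReal_mul_volume_closedBall_inter_le_measure_closedBall {X : Set E} {P : Measure E}
    {p₀ : ℝ} (hdens : ∀ A ⊆ X, MeasurableSet A → ENNReal.ofReal p₀ * volume A ≤ P A)
    {a c v : E} {r : ℝ} (hac : a ∈ closedBall c r) (hcX : closedBall c r ⊆ X) (hv : r ≤ ‖v‖)
    (δ : ℝ) :
    ENNReal.ofReal p₀ * volume (closedBall 0 δ ∩ closedBall v r) ≤ P (closedBall a δ) :=
  calc ENNReal.ofReal p₀ * volume (closedBall 0 δ ∩ closedBall v r)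
      ≤ ENNReal.ofReal p₀ * volume (closedBall a δ ∩ closedBall c r) := by
        gcongr ENNReal.ofReal p₀ * ?_
        refine volume_closedBall_inter_closedBall_le_of_dist_le ?_ δ r
        rw [dist_zero_left]
        exact (mem_closedBall.1 hac).trans hv
    _ ≤ P (closedBall a δ ∩ closedBall c r) :=
        hdens _ (Set.inter_subset_right.trans hcX)
          (measurableSet_closedBall.inter measurableSet_closedBall)
    _ ≤ P (closedBall a δ) := measure_mono Set.inter_subset_left

end Lens

theorem IsLUB.mem_frontier {α : Type*} [LinearOrder α] [TopologicalSpace α] [OrderTopology α]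
    [DenselyOrdered α] [NoMaxOrder α] {S : Set α} {T : α} (hT : IsLUB S T) (hS : S.Nonempty) :
    T ∈ frontier S := by
  refine ⟨hT.mem_closure hS, fun hint => ?_⟩
  have := interior_mono (t := Iic T) hT.1 hint
  rw [interior_Iic] at this
  exact lt_irrefl T this

section Convex

variable {F : Type*} [NormedAddCommGroup F] [NormedSpace ℝ F]

theorem Convex.subset_of_frontier_subset {K C : Set F} (hK : Bornology.IsBounded K)
    (hC : Convex ℝ C) {c : F} (hc : c ∈ C) (hfr : frontier K ⊆ C) : K ⊆ C := by
  intro y hy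
  rcases eq_or_ne y c with rfl | hyc
  · exact hc
  -- The last point `g T` of the ray `g` from `c` through `y` that lies in `K` is in `frontier K`.
  set g : ℝ → F := fun t => c + t • (y - c)
  have hg : Continuous g := by fun_prop
  set S := g ⁻¹' K
  have h1S : (1 : ℝ) ∈ S := by simpa [S, g] using hy
  obtain ⟨R, hR⟩ := hK.subset_closedBall c
  have hSbdd : BddAbove S := ⟨R / ‖y - c‖, fun t ht => by
    have hdist : |t| * ‖y - c‖ ≤ R := by
      simpa [g, dist_eq_norm, norm_smul] using mem_closedBall.1 (hR ht)
    rw [le_div_iff₀ (norm_pos_iff.2 (sub_ne_zero.2 hyc))]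
    exact (mul_le_mul_of_nonneg_right (le_abs_self t) (norm_nonneg _)).trans hdist⟩
  set T := sSup S
  have hT1 : 1 ≤ T := le_csSup hSbdd h1S
  have hgT : g T ∈ C :=
    hfr (hg.frontier_preimage_subset K ((isLUB_csSup ⟨1, h1S⟩ hSbdd).mem_frontier ⟨1, h1S⟩))
  have := hC.add_smul_sub_mem hc hgT (t := T⁻¹) ⟨by positivity, inv_le_one_of_one_le₀ hT1⟩
  convert this using 1
  simp only [g, add_sub_cancel_left, smul_smul, inv_mul_cancel₀ (by positivity : T ≠ 0),
    one_smul]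
  abel

theorem hausdorffDist_convexHull_le_of_subset_add_closedBall {s K : Set F} {ε : ℝ} (hε : 0 ≤ ε)
    (hsK : s ⊆ K) (hK : K ⊆ convexHull ℝ s + closedBall 0 ε) :
    hausdorffDist (convexHull ℝ s) (convexHull ℝ K) ≤ ε := by
  have hhull : convexHull ℝ K ⊆ convexHull ℝ s + closedBall 0 ε :=
    convexHull_min hK ((convex_convexHull ℝ s).add (convex_closedBall 0 ε))
  refine hausdorffDist_le_of_infDist hε (fun w hw => ?_) (fun w hw => ?_)
  · rw [infDist_zero_of_mem (convexHull_mono hsK hw)]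
    exact hε
  · obtain ⟨u, hu, v, hv, rfl⟩ := hhull hw
    calc infDist (u + v) (convexHull ℝ s) ≤ dist (u + v) u := infDist_le_dist_of_mem hu
      _ ≤ ε := by simpa using hv

end Convex

section Sampling

variable {E F ι ι' : Type*} [MetricSpace E] [NormedAddCommGroup F] [NormedSpace ℝ F]

theorem image_subset_convexHull_add_closedBall_of_forall_exists_mem {X : Set E}
    (hX : IsCompact X) {f : E → F} {K : NNReal} (hf : LipschitzOnWith K f X)
    (hbd : frontier (f '' X) ⊆ f '' frontier X) [Nonempty ι] {y : ι → E} (hy : ∀ j, y j ∈ X)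
    {a : ι' → E} {δ ε : ℝ} (hcov : frontier X ⊆ ⋃ i, closedBall (a i) δ)
    (hhit : ∀ i, ∃ j, y j ∈ closedBall (a i) δ) (hδε : K * (2 * δ) ≤ ε) (hε : 0 ≤ ε) :
    f '' X ⊆ convexHull ℝ (range fun j => f (y j)) + closedBall 0 ε := by
  obtain ⟨j₀⟩ := ‹Nonempty ι›
  refine Convex.subset_of_frontier_subset (hX.image_of_continuousOn hf.continuousOn).isBounded
    ((convex_convexHull ℝ _).add (convex_closedBall 0 ε))
    ⟨_, subset_convexHull ℝ _ ⟨j₀, rfl⟩, 0, mem_closedBall_self hε, add_zero _⟩ ?_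
  rintro _ hz
  obtain ⟨x', hx', rfl⟩ := hbd hz
  obtain ⟨i, hi⟩ := mem_iUnion.1 (hcov hx')
  obtain ⟨j, hj⟩ := hhit i
  have hclose : dist (f x') (f (y j)) ≤ ε :=
    calc dist (f x') (f (y j)) ≤ K * dist x' (y j) :=
          hf.dist_le_mul x' (hX.isClosed.frontier_subset hx') (y j) (hy j)
      _ ≤ K * (2 * δ) := by
          gcongr
          linarith [dist_triangle_right x' (y j) (a i), mem_closedBall.1 hi, mem_closedBall.1 hj]
      _ ≤ ε := hδε
  exact ⟨f (y j), subset_convexHull ℝ _ ⟨j, rfl⟩, f x' - f (y j),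
    by rwa [mem_closedBall_zero_iff, ← dist_eq_norm], add_sub_cancel _ _⟩

theorem hausdorffDist_convexHull_image_le_of_forall_exists_mem {X : Set E} (hX : IsCompact X)
    {f : E → F} {K : NNReal} (hf : LipschitzOnWith K f X)
    (hbd : frontier (f '' X) ⊆ f '' frontier X) [Nonempty ι] {y : ι → E} (hy : ∀ j, y j ∈ X)
    {a : ι' → E} {δ ε : ℝ} (hcov : frontier X ⊆ ⋃ i, closedBall (a i) δ)
    (hhit : ∀ i, ∃ j, y j ∈ closedBall (a i) δ) (hδε : K * (2 * δ) ≤ ε) (hε : 0 ≤ ε) :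
    hausdorffDist (convexHull ℝ (range fun j => f (y j))) (convexHull ℝ (f '' X)) ≤ ε ∧
      f '' X ⊆ convexHull ℝ (range fun j => f (y j)) + closedBall 0 ε := by
  have hsub := image_subset_convexHull_add_closedBall_of_forall_exists_mem hX hf hbd hy hcov hhit
    hδε hε
  exact ⟨hausdorffDist_convexHull_le_of_subset_add_closedBall hε
    (range_subset_iff.2 fun j => mem_image_of_mem f (hy j)) hsub, hsub⟩

end Sampling

section Independence

variable {Ω E : Type*} [MeasurableSpace Ω] [MeasurableSpace E] {μ : Measure Ω}

theorem ProbabilityTheory.iIndepFun.measure_forall_notMem_eq_pow {ι : Type*} [Fintype ι]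
    {x : ι → Ω → E} (hindep : iIndepFun x μ) (hx : ∀ j, Measurable (x j)) {P : Measure E}
    (hlaw : ∀ j, μ.map (x j) = P) {B : Set E} (hB : MeasurableSet B) :
    μ {ω | ∀ j, x j ω ∉ B} = P Bᶜ ^ Fintype.card ι := by
  have hinter : {ω | ∀ j, x j ω ∉ B} = ⋂ j, x j ⁻¹' Bᶜ := by ext; simp
  rw [hinter, hindep.meas_iInter fun j => ⟨Bᶜ, hB.compl, rfl⟩]
  simp_rw [← Measure.map_apply (hx _) hB.compl, hlaw, Finset.prod_const, Finset.card_univ]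

theorem MeasureTheory.one_sub_sum_measure_le_measure_iInter_compl {ι : Type*} [Fintype ι]
    [IsProbabilityMeasure μ] {s : ι → Set Ω} (hs : ∀ i, MeasurableSet (s i)) :
    1 - ∑ i, μ (s i) ≤ μ (⋂ i, (s i)ᶜ) := by
  rw [← compl_iUnion, prob_compl_eq_one_sub (MeasurableSet.iUnion hs)]
  exact tsub_le_tsub_left (measure_iUnion_fintype_le μ s) 1

theorem MeasureTheory.ae_forall_mem_of_map_eq {ι : Type*} [Countable ι] {x : ι → Ω → E}
    (hx : ∀ j, Measurable (x j)) {P : Measure E} (hlaw : ∀ j, μ.map (x j) = P) {X : Set E}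
    (hX : MeasurableSet X) (hPX : ∀ᵐ y ∂P, y ∈ X) : ∀ᵐ ω ∂μ, ∀ j, x j ω ∈ X :=
  ae_all_iff.2 fun j => (ae_map_iff (hx j).aemeasurable hX).1 (hlaw j ▸ hPX)

theorem ProbabilityTheory.iIndepFun.one_sub_card_mul_le_measure_forall_exists_mem
    {ι κ : Type*} [Fintype ι] [Fintype κ] [IsProbabilityMeasure μ] {x : ι → Ω → E}
    (hindep : iIndepFun x μ) (hx : ∀ j, Measurable (x j)) {P : Measure E}
    [IsProbabilityMeasure P] (hlaw : ∀ j, μ.map (x j) = P) {B : κ → Set E}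
    (hB : ∀ i, MeasurableSet (B i)) {q : ENNReal} (hq : ∀ i, q ≤ P (B i)) :
    1 - Fintype.card κ * (1 - q) ^ Fintype.card ι ≤ μ {ω | ∀ i, ∃ j, x j ω ∈ B i} := by
  have hmiss (i : κ) : μ {ω | ∀ j, x j ω ∉ B i} ≤ (1 - q) ^ Fintype.card ι := by
    rw [hindep.measure_forall_notMem_eq_pow hx hlaw (hB i), prob_compl_eq_one_sub (hB i)]
    gcongr
    exact hq i
  calc 1 - Fintype.card κ * (1 - q) ^ Fintype.card ι ≤ 1 - ∑ i, μ {ω | ∀ j, x j ω ∉ B i} := by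
        gcongr
        exact (Finset.sum_le_sum fun i _ => hmiss i).trans_eq (by simp)
    _ ≤ μ (⋂ i, {ω | ∀ j, x j ω ∉ B i}ᶜ) :=
        one_sub_sum_measure_le_measure_iInter_compl fun i => by
          simp only [ofPred_forall]
          exact MeasurableSet.iInter fun j => hx j (hB i).compl
    _ = μ {ω | ∀ i, ∃ j, x j ω ∈ B i} := by
        congr 1
        ext ω
        simp

end Independence

theorem ENNReal.ofReal_one_sub_mul_one_sub_pow {q : ℝ} (hq₀ : 0 ≤ q) (hq₁ : q ≤ 1) (N M : ℕ) :
    ENNReal.ofReal (1 - N * (1 - q) ^ M) = 1 - N * (1 - ENNReal.ofReal q) ^ M := by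
  have ht : 0 ≤ 1 - q := sub_nonneg.2 hq₁
  rw [ENNReal.ofReal_sub _ (mul_nonneg N.cast_nonneg (pow_nonneg ht M)),
    ENNReal.ofReal_mul N.cast_nonneg, ENNReal.ofReal_natCast, ENNReal.ofReal_pow ht,
    ENNReal.ofReal_sub _ hq₀, ENNReal.ofReal_one]

theorem randup_finite_sample_rconvex_general {p n M N : ℕ} (hp : 0 < p)
    (𝒳 : Set (EuclideanSpace ℝ (Fin p))) (h𝒳ne : 𝒳.Nonempty) (h𝒳c : IsCompact 𝒳)
    (f : EuclideanSpace ℝ (Fin p) → EuclideanSpace ℝ (Fin n))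
    (L : ℝ) (hL : 0 < L)
    (hf : ∀ x₁ ∈ 𝒳, ∀ x₂ ∈ 𝒳, ‖f x₁ - f x₂‖ ≤ L * ‖x₁ - x₂‖)
    (hbd : frontier (f '' 𝒳) ⊆ f '' frontier 𝒳)
    (r : ℝ)
    (hrconv : ∀ x' ∈ frontier 𝒳, ∃ xt,
      x' ∈ Metric.closedBall xt r ∧ Metric.closedBall xt r ⊆ 𝒳)
    {Ω : Type*} [MeasureSpace Ω] [IsProbabilityMeasure (ℙ : Measure Ω)]
    (x : Fin M → Ω → EuclideanSpace ℝ (Fin p)) (hxmeas : ∀ i, Measurable (x i))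
    (P𝒳 : Measure (EuclideanSpace ℝ (Fin p))) [IsProbabilityMeasure P𝒳]
    (hlaw : ∀ i, Measure.map (x i) ℙ = P𝒳)
    (hindep : iIndepFun x ℙ)
    (hsupp : P𝒳 𝒳 = 1)
    (p₀ : ℝ) (hp₀ : 0 < p₀)
    (hdens : ∀ A ⊆ 𝒳, MeasurableSet A → ENNReal.ofReal p₀ * volume A ≤ P𝒳 A)
    (ε : ℝ) (hε : 0 < ε)
    (rvec : EuclideanSpace ℝ (Fin p)) (hrvec : rvec = EuclideanSpace.single (⟨0, hp⟩ : Fin p) r)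
    (Λ : ℝ)
    (hΛ : Λ = (volume (Metric.closedBall (0 : EuclideanSpace ℝ (Fin p)) (ε / (2 * L)) ∩
        Metric.closedBall rvec r)).toReal)
    (a : Fin N → EuclideanSpace ℝ (Fin p)) (ha : ∀ i, a i ∈ frontier 𝒳)
    (hcov : frontier 𝒳 ⊆ ⋃ i, Metric.closedBall (a i) (ε / (2 * L))) :
    ENNReal.ofReal (1 - N * (1 - p₀ * Λ) ^ M) ≤
      ℙ {ω | Metric.hausdorffDist
            (convexHull ℝ (Set.range fun i => f (x i ω)))
            (convexHull ℝ (f '' 𝒳)) ≤ ε ∧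
          f '' 𝒳 ⊆ convexHull ℝ (Set.range fun i => f (x i ω)) +
            Metric.closedBall (0 : EuclideanSpace ℝ (Fin n)) ε} := by
  have : Nonempty (Fin p) := ⟨⟨0, hp⟩⟩
  obtain ⟨x₀, hx₀⟩ : (frontier 𝒳).Nonempty := nonempty_frontier_iff.2 ⟨h𝒳ne, h𝒳c.ne_univ⟩
  obtain ⟨i₀, -⟩ := mem_iUnion.1 (hcov hx₀)
  have hΛ₀ : 0 ≤ Λ := hΛ ▸ ENNReal.toReal_nonneg
  have hball (i : Fin N) : ENNReal.ofReal (p₀ * Λ) ≤ P𝒳 (closedBall (a i) (ε / (2 * L))) := by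
    obtain ⟨xt, hat, hxt⟩ := hrconv _ (ha i)
    rw [ENNReal.ofReal_mul hp₀.le, hΛ, ENNReal.ofReal_toReal
      (measure_inter_lt_top_of_left_ne_top measure_closedBall_lt_top.ne).ne]
    exact ofReal_mul_volume_closedBall_inter_le_measure_closedBall hdens hat hxt
      (by simp [hrvec, le_abs_self]) _
  have hLip : LipschitzOnWith L.toNNReal f 𝒳 :=
    LipschitzOnWith.of_dist_le' (by simpa only [dist_eq_norm] using hf)
  have hδε : (L.toNNReal : ℝ) * (2 * (ε / (2 * L))) ≤ ε :=
    le_of_eq (by rw [Real.coe_toNNReal _ hL.le]; field_simp)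
  calc ENNReal.ofReal (1 - N * (1 - p₀ * Λ) ^ M)
      = 1 - Fintype.card (Fin N) * (1 - ENNReal.ofReal (p₀ * Λ)) ^ Fintype.card (Fin M) := by
        rw [Fintype.card_fin, Fintype.card_fin]
        exact ENNReal.ofReal_one_sub_mul_one_sub_pow (mul_nonneg hp₀.le hΛ₀)
          (ENNReal.ofReal_le_one.1 ((hball i₀).trans prob_le_one)) N M
    _ ≤ ℙ {ω | ∀ i, ∃ j, x j ω ∈ closedBall (a i) (ε / (2 * L))} :=
        hindep.one_sub_card_mul_le_measure_forall_exists_mem hxmeas hlaw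
          (fun _ => measurableSet_closedBall) hball
    _ ≤ _ := by
        refine measure_mono_ae ((ae_forall_mem_of_map_eq hxmeas hlaw h𝒳c.measurableSet
          ((mem_ae_iff_prob_eq_one h𝒳c.measurableSet).2 hsupp)).mono
            fun ω hω (hhit : ∀ i, ∃ j, _) => ?_)
        have : Nonempty (Fin M) := ⟨(hhit i₀).choose⟩
        exact hausdorffDist_convexHull_image_le_of_forall_exists_mem h𝒳c hLip hbd hω hcov hhit
          hδε hε.le

/-- **Corollary: finite-sample bound for smooth input sets and continuous densities.**
If the complement of `𝒳` is `r`-convex and the sampling law has a density lower bound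
`p₀·λ`, then with probability at least `1 - N·(1 - p₀Λ)^M` (with
`Λ = λ(closedBall 0 (ε/(2L)) ∩ closedBall r⃗ r)`), both the Hausdorff bound
`d_H(Ŷ^M, convexHull 𝒴) ≤ ε` and the outer approximation `𝒴 ⊆ Ŷ^M ⊕ closedBall 0 ε` hold. -/
theorem randup_finite_sample_rconvex {p n M N : ℕ} (hp : 0 < p)
    (𝒳 : Set (EuclideanSpace ℝ (Fin p))) (h𝒳ne : 𝒳.Nonempty) (h𝒳c : IsCompact 𝒳)
    (f : EuclideanSpace ℝ (Fin p) → EuclideanSpace ℝ (Fin n))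
    (L : ℝ) (hL : 0 < L)
    (hf : ∀ x₁ ∈ 𝒳, ∀ x₂ ∈ 𝒳, ‖f x₁ - f x₂‖ ≤ L * ‖x₁ - x₂‖)
    (hbd : frontier (f '' 𝒳) ⊆ f '' frontier 𝒳)
    (r : ℝ) (hr : 0 < r)
    (hrconv : ∀ x' ∈ frontier 𝒳, ∃ xt,
      x' ∈ Metric.closedBall xt r ∧ Metric.closedBall xt r ⊆ 𝒳)
    {Ω : Type*} [MeasureSpace Ω] [IsProbabilityMeasure (ℙ : Measure Ω)]
    (x : Fin M → Ω → EuclideanSpace ℝ (Fin p)) (hxmeas : ∀ i, Measurable (x i))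
    (P𝒳 : Measure (EuclideanSpace ℝ (Fin p))) [IsProbabilityMeasure P𝒳]
    (hlaw : ∀ i, Measure.map (x i) ℙ = P𝒳)
    (hindep : iIndepFun x ℙ)
    (hsupp : P𝒳 𝒳 = 1)
    (p₀ : ℝ) (hp₀ : 0 < p₀)
    (hdens : ∀ A ⊆ 𝒳, MeasurableSet A → ENNReal.ofReal p₀ * volume A ≤ P𝒳 A)
    (ε : ℝ) (hε : 0 < ε)
    (rvec : EuclideanSpace ℝ (Fin p)) (hrvec : rvec = EuclideanSpace.single (⟨0, hp⟩ : Fin p) r)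
    (Λ : ℝ)
    (hΛ : Λ = (volume (Metric.closedBall (0 : EuclideanSpace ℝ (Fin p)) (ε / (2 * L)) ∩
        Metric.closedBall rvec r)).toReal)
    (a : Fin N → EuclideanSpace ℝ (Fin p)) (ha : ∀ i, a i ∈ frontier 𝒳)
    (hcov : frontier 𝒳 ⊆ ⋃ i, Metric.closedBall (a i) (ε / (2 * L))) :
    ENNReal.ofReal (1 - N * (1 - p₀ * Λ) ^ M) ≤
      ℙ {ω | Metric.hausdorffDist
            (convexHull ℝ (Set.range fun i => f (x i ω)))
            (convexHull ℝ (f '' 𝒳)) ≤ ε ∧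
          f '' 𝒳 ⊆ convexHull ℝ (Set.range fun i => f (x i ω)) +
            Metric.closedBall (0 : EuclideanSpace ℝ (Fin n)) ε} :=
  randup_finite_sample_rconvex_general hp 𝒳 h𝒳ne h𝒳c f L hL hf hbd r hrconv x hxmeas P𝒳 hlaw hindep
    hsupp p₀ hp₀ hdens ε hε rvec hrvec Λ hΛ a ha hcov
end

section
/- Let 𝒴 ⊆ ℝ^n be nonempty compact and let y_1, …, y_M be random variables with values in ℝ^n (on some probability space). Let ε > 0, and suppose the frontier ∂𝒴 can be covered by N closed balls of radius ε centered at points of ∂𝒴. Define π = sup over y ∈ ∂𝒴 of the probability that ‖y_i − y‖ > ε for every i = 1, …, M. Then the probability of the event {∂𝒴 ⊆ ⋃_{i=1}^M closedBall(y_i, 2ε)} is at least 1 − N·π. -/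
open MeasureTheory ProbabilityTheory Metric

/-- **Boundary coverage lemma** (Lemma 3).
If `∂𝒴` is covered by `N` closed `ε`-balls centered at points of `∂𝒴`, and
`π = sup_{y ∈ ∂𝒴} ℙ(∀ i, ‖y_i − y‖ > ε)`, then with probability at least `1 − N·π`
the boundary `∂𝒴` is contained in the union of the `2ε`-balls around the samples. -/
theorem boundary_coverage {n M N : ℕ}
    (𝒴 : Set (EuclideanSpace ℝ (Fin n))) (h𝒴ne : 𝒴.Nonempty) (h𝒴c : IsCompact 𝒴)
    {Ω : Type*} [MeasureSpace Ω] [IsProbabilityMeasure (ℙ : Measure Ω)]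
    (y : Fin M → Ω → EuclideanSpace ℝ (Fin n))
    (ε : ℝ) (hε : 0 < ε)
    (a : Fin N → EuclideanSpace ℝ (Fin n)) (ha : ∀ i, a i ∈ frontier 𝒴)
    (hcov : frontier 𝒴 ⊆ ⋃ i, Metric.closedBall (a i) ε) :
    ENNReal.ofReal
        (1 - N * ⨆ z ∈ frontier 𝒴, (ℙ {ω | ∀ i, ε < ‖y i ω - z‖}).toReal) ≤
      ℙ {ω | frontier 𝒴 ⊆ ⋃ i, Metric.closedBall (y i ω) (2 * ε)} := by
  set π := ⨆ z ∈ frontier 𝒴, (ℙ {ω | ∀ i, ε < ‖y i ω - z‖}).toReal with hπ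
  set E : Set Ω := {ω | ∀ j : Fin N, ∃ i : Fin M, ‖y i ω - a j‖ ≤ ε} with hE
  have hEsub : E ⊆ {ω | frontier 𝒴 ⊆ ⋃ i, Metric.closedBall (y i ω) (2 * ε)} := by
    intro ω hω z hz
    obtain ⟨j, hj⟩ := Set.mem_iUnion.1 (hcov hz)
    obtain ⟨i, hi⟩ := hω j
    refine Set.mem_iUnion.2 ⟨i, ?_⟩
    simp only [Metric.mem_closedBall] at hj ⊢
    have ht : dist z (y i ω) ≤ dist z (a j) + dist (a j) (y i ω) := dist_triangle _ _ _
    have h2 : dist (a j) (y i ω) ≤ ε := by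
      rw [dist_comm, dist_eq_norm]; exact hi
    linarith
  have hcompl : Eᶜ ⊆ ⋃ j : Fin N, {ω | ∀ i, ε < ‖y i ω - a j‖} := by
    intro ω hω
    simp only [hE, Set.mem_compl_iff, Set.mem_setOf_eq, not_forall] at hω
    obtain ⟨j, hj⟩ := hω
    push_neg at hj
    exact Set.mem_iUnion.2 ⟨j, hj⟩
  have hle1 : ∀ s : Set Ω, (ℙ s).toReal ≤ 1 := fun s =>
    ENNReal.toReal_le_of_le_ofReal one_pos.le (by simpa using prob_le_one (μ := ℙ) (s := s))
  have hbdd : BddAbove (Set.range fun z =>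
      ⨆ _ : z ∈ frontier 𝒴, (ℙ {ω | ∀ i, ε < ‖y i ω - z‖}).toReal) := by
    refine ⟨1, ?_⟩
    rintro x ⟨z, rfl⟩
    exact Real.iSup_le (fun _ => hle1 _) one_pos.le
  have hb : ∀ j : Fin N, (ℙ {ω | ∀ i, ε < ‖y i ω - a j‖}).toReal ≤ π := by
    intro j
    have := le_ciSup hbdd (a j)
    rwa [ciSup_pos (ha j)] at this
  have h1 : (ℙ Eᶜ).toReal ≤ N * π := by
    have hsum : ℙ Eᶜ ≤ ∑ j : Fin N, ℙ {ω | ∀ i, ε < ‖y i ω - a j‖} :=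
      (measure_mono hcompl).trans (measure_iUnion_fintype_le _ _)
    have hfin : ∀ j ∈ Finset.univ, ℙ {ω | ∀ i, ε < ‖y i ω - a j‖} ≠ ⊤ :=
      fun j _ => measure_ne_top _ _
    have := ENNReal.toReal_mono (by
        exact ENNReal.sum_ne_top.2 hfin) hsum
    rw [ENNReal.toReal_sum hfin] at this
    refine this.trans ?_
    calc ∑ j : Fin N, (ℙ {ω | ∀ i, ε < ‖y i ω - a j‖}).toReal
        ≤ ∑ _j : Fin N, π := Finset.sum_le_sum fun j _ => hb j
      _ = N * π := by simp [Finset.sum_const, nsmul_eq_mul]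
  have h2 : 1 ≤ (ℙ E).toReal + (ℙ Eᶜ).toReal := by
    have : (1 : ENNReal) ≤ ℙ E + ℙ Eᶜ := by
      calc (1 : ENNReal) = ℙ (E ∪ Eᶜ) := by simp
        _ ≤ ℙ E + ℙ Eᶜ := measure_union_le _ _
    have := ENNReal.toReal_mono (by
        exact ENNReal.add_ne_top.2 ⟨measure_ne_top _ _, measure_ne_top _ _⟩) this
    rwa [ENNReal.toReal_one, ENNReal.toReal_add (measure_ne_top _ _) (measure_ne_top _ _)] at this
  have hkey : 1 - N * π ≤ (ℙ E).toReal := by linarith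
  calc ENNReal.ofReal (1 - N * π) ≤ ℙ E := ENNReal.ofReal_le_of_le_toReal hkey
    _ ≤ _ := measure_mono hEsub
end

section
/- Let 𝒴 ⊆ ℝ^n be a nonempty compact set, let ε ≥ 0, and let Y ⊆ ℝ^n be a nonempty compact set such that Y ⊆ 𝒴 and the frontier ∂𝒴 satisfies ∂𝒴 ⊆ Y ⊕ closedBall(0, ε), where ⊕ is the Minkowski sum. Then the Hausdorff distance between the convex hulls satisfies d_H(convexHull(Y), convexHull(𝒴)) ≤ ε. -/
open Metric Pointwise

/-- **Hausdorff distance between convex hulls** (Lemma 4).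
If `Y ⊆ 𝒴` are nonempty compact sets with `∂𝒴 ⊆ Y ⊕ closedBall 0 ε`, then
`d_H(convexHull Y, convexHull 𝒴) ≤ ε`. -/
theorem hausdorffDist_convexHull_le {n : ℕ}
    (𝒴 Y : Set (EuclideanSpace ℝ (Fin n)))
    (h𝒴ne : 𝒴.Nonempty) (h𝒴c : IsCompact 𝒴)
    (hYne : Y.Nonempty) (hYc : IsCompact Y)
    (ε : ℝ) (hε : 0 ≤ ε)
    (hsub : Y ⊆ 𝒴)
    (hfr : frontier 𝒴 ⊆ Y + Metric.closedBall (0 : EuclideanSpace ℝ (Fin n)) ε) :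
    Metric.hausdorffDist (convexHull ℝ Y) (convexHull ℝ 𝒴) ≤ ε := by
  set C := closure (convexHull ℝ Y) with hCdef
  have hCcomp : IsCompact C := by
    apply Metric.isCompact_of_isClosed_isBounded isClosed_closure
    exact (isBounded_convexHull.mpr hYc.isBounded).closure
  set K := C + Metric.closedBall (0 : EuclideanSpace ℝ (Fin n)) ε with hKdef
  have hKconv : Convex ℝ K :=
    ((convex_convexHull ℝ Y).closure).add (convex_closedBall 0 ε)
  have hKcomp : IsCompact K := hCcomp.add (isCompact_closedBall 0 ε)
  have hKclosed : IsClosed K := hKcomp.isClosed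
  have hYK : Y + Metric.closedBall (0 : EuclideanSpace ℝ (Fin n)) ε ⊆ K :=
    Set.add_subset_add_right ((subset_convexHull ℝ Y).trans subset_closure)
  have hKne : K.Nonempty := by
    obtain ⟨y0, hy0⟩ := hYne
    exact ⟨y0 + 0, Set.add_mem_add (subset_closure (subset_convexHull ℝ Y hy0))
      (Metric.mem_closedBall_self hε)⟩
  have hmain : 𝒴 ⊆ K := by
    intro x hx
    by_contra hxK
    obtain ⟨f, u, hfa, hfx⟩ := geometric_hahn_banach_closed_point hKconv hKclosed hxK
    have hf0 : f ≠ 0 := by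
      intro h
      obtain ⟨a, ha⟩ := hKne
      have h1 := hfa a ha
      rw [h] at h1 hfx
      simp at h1 hfx
      linarith
    obtain ⟨w, hw⟩ : ∃ w : EuclideanSpace ℝ (Fin n), f w ≠ 0 := by
      by_contra hcon
      push_neg at hcon
      exact hf0 (ContinuousLinearMap.ext fun w => by simp [hcon w])
    set v : EuclideanSpace ℝ (Fin n) := (f w)⁻¹ • w with hvdef
    have hfv : f v = 1 := by
      rw [hvdef, map_smul, smul_eq_mul, inv_mul_cancel₀ hw]
    have hv0 : v ≠ 0 := by
      intro h; rw [h] at hfv; simp at hfv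
    have hvpos : (0 : ℝ) < ‖v‖ := norm_pos_iff.mpr hv0
    set T : Set ℝ := {t : ℝ | 0 ≤ t ∧ x + t • v ∈ 𝒴} with hTdef
    have hT0 : (0 : ℝ) ∈ T := by
      refine ⟨le_refl 0, ?_⟩
      simpa using hx
    have hTne : T.Nonempty := ⟨0, hT0⟩
    obtain ⟨M, hM⟩ := h𝒴c.isBounded.exists_norm_le
    have hTbdd : BddAbove T := by
      refine ⟨(M + ‖x‖) / ‖v‖, fun t ht => ?_⟩
      obtain ⟨ht0, htm⟩ := ht
      have h1 : ‖t • v‖ ≤ M + ‖x‖ := by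
        have he : t • v = (x + t • v) - x := by abel
        rw [he]
        calc ‖(x + t • v) - x‖ ≤ ‖x + t • v‖ + ‖x‖ := norm_sub_le _ _
          _ ≤ M + ‖x‖ := by linarith [hM _ htm]
      rw [norm_smul, Real.norm_eq_abs, abs_of_nonneg ht0] at h1
      rw [le_div_iff₀ hvpos]
      exact h1
    have hTclosed : IsClosed T := by
      have he : T = {t : ℝ | 0 ≤ t} ∩ (fun t : ℝ => x + t • v) ⁻¹' 𝒴 := rfl
      rw [he]
      exact (isClosed_le continuous_const continuous_id).inter
        (h𝒴c.isClosed.preimage (continuous_const.add (continuous_id.smul continuous_const)))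
    set t₀ := sSup T with ht₀def
    have ht₀T : t₀ ∈ T := hTclosed.csSup_mem hTne hTbdd
    set z := x + t₀ • v with hzdef
    have hz𝒴 : z ∈ 𝒴 := ht₀T.2
    have hzfr : z ∈ frontier 𝒴 := by
      constructor
      · exact subset_closure hz𝒴
      · intro hzint
        obtain ⟨δ, hδ0, hδ⟩ := Metric.isOpen_iff.mp isOpen_interior z hzint
        have hpos : 0 < δ / (2 * ‖v‖) := by positivity
        have ht'T : t₀ + δ / (2 * ‖v‖) ∈ T := by
          refine ⟨by linarith [ht₀T.1], ?_⟩
          apply interior_subset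
          apply hδ
          have he : x + (t₀ + δ / (2 * ‖v‖)) • v = z + (δ / (2 * ‖v‖)) • v := by
            rw [hzdef, add_smul]; abel
          rw [Metric.mem_ball, he, dist_eq_norm]
          have he2 : z + (δ / (2 * ‖v‖)) • v - z = (δ / (2 * ‖v‖)) • v := by abel
          rw [he2, norm_smul, Real.norm_eq_abs, abs_of_pos hpos]
          rw [div_mul_eq_mul_div, mul_comm]
          rw [div_lt_iff₀ (by positivity)]
          nlinarith
        have hle := le_csSup hTbdd ht'T
        rw [← ht₀def] at hle
        linarith
    have hzK : z ∈ K := hYK (hfr hzfr)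
    have h1 : f z < u := hfa z hzK
    have h2 : f z = f x + t₀ := by
      rw [hzdef, map_add, map_smul, smul_eq_mul, hfv, mul_one]
    linarith [ht₀T.1, hfx]
  have hhullsub : convexHull ℝ 𝒴 ⊆ K := convexHull_min hmain hKconv
  refine Metric.hausdorffDist_le_of_infDist hε ?_ ?_
  · intro x hx
    have : x ∈ convexHull ℝ 𝒴 := convexHull_mono hsub hx
    calc Metric.infDist x (convexHull ℝ 𝒴) = 0 := Metric.infDist_zero_of_mem this
      _ ≤ ε := hε
  · intro y hy
    obtain ⟨a, ha, b, hb, hab⟩ := hhullsub hy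
    have h1 : Metric.infDist y (convexHull ℝ Y) = Metric.infDist y C := by
      rw [hCdef, Metric.infDist_closure]
    rw [h1]
    calc Metric.infDist y C ≤ dist y a := Metric.infDist_le_dist_of_mem ha
      _ ≤ ε := by
        rw [← hab, dist_eq_norm]
        have he : a + b - a = b := by abel
        rw [he]
        simpa using hb
end

section
/- Let 𝒳 ⊆ ℝ^p be a set whose complement is r-convex for some r > 0, i.e., for every x in the frontier ∂𝒳 there exists x̃ such that x ∈ closedBall(x̃, r) ⊆ 𝒳. Let r⃗ = (r, 0, …, 0) ∈ ℝ^p and let λ denote Lebesgue measure on ℝ^p. Then for every ε ≥ 0 and every x ∈ ∂𝒳, λ(𝒳 ∩ closedBall(x, ε)) ≥ λ(closedBall(0, ε) ∩ closedBall(r⃗, r)). -/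
open MeasureTheory Metric

/-!
At a boundary point `x`, the ball `closedBall xt r ⊆ 𝒳` supplied by `r`-convexity must pass
through `x`, i.e. `dist x xt = r`: otherwise `x` would be interior to `𝒳`. Hence
`𝒳 ∩ closedBall x ε` contains `closedBall x ε ∩ closedBall xt r`, and a rigid motion of
`ℝ^p` sending `0 ↦ x` and `r⃗ ↦ xt` carries `closedBall 0 ε ∩ closedBall r⃗ r` onto it
without changing its volume.
-/

theorem dist_eq_of_mem_frontier_of_closedBall_subset {α : Type*} [PseudoMetricSpace α]
    {s : Set α} {x c : α} {r : ℝ} (hx : x ∈ frontier s) (hxc : x ∈ closedBall c r)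
    (hs : closedBall c r ⊆ s) : dist x c = r := by
  refine le_antisymm (mem_closedBall.mp hxc) (not_lt.mp fun hlt => hx.2 ?_)
  exact interior_mono hs (ball_subset_interior_closedBall (mem_ball.mpr hlt))

section InnerProductSpace

variable {E : Type*} [NormedAddCommGroup E] [InnerProductSpace ℝ E] [FiniteDimensional ℝ E]
  [MeasurableSpace E] [BorelSpace E]

theorem exists_isometryEquiv_measurePreserving_apply_eq_apply_eq {a b a' b' : E}
    (h : dist a' b' = dist a b) :
    ∃ f : E ≃ᵢ E, MeasurePreserving f ∧ f a' = a ∧ f b' = b := by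
  set O : E ≃ₗᵢ[ℝ] E := Submodule.reflection (ℝ ∙ (b' - a' - (b - a)))ᗮ
  have hO : O (b' - a') = b - a := by
    refine Submodule.reflection_sub ?_
    rwa [← dist_eq_norm', ← dist_eq_norm']
  refine ⟨(IsometryEquiv.subRight a').trans (O.toIsometryEquiv.trans (IsometryEquiv.addLeft a)),
    ?_, by simp, ?_⟩
  · exact (measurePreserving_add_left volume a).comp
      (O.measurePreserving.comp (measurePreserving_sub_right volume a'))
  · simp [hO]

theorem volume_closedBall_inter_closedBall_congr {a b a' b' : E} (h : dist a' b' = dist a b)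
    (ε r : ℝ) :
    volume (closedBall a' ε ∩ closedBall b' r) = volume (closedBall a ε ∩ closedBall b r) := by
  obtain ⟨f, hf, rfl, rfl⟩ := exists_isometryEquiv_measurePreserving_apply_eq_apply_eq h
  have hmeas : MeasurableSet (closedBall (f a') ε ∩ closedBall (f b') r) :=
    measurableSet_closedBall.inter measurableSet_closedBall
  rw [← hf.measure_preimage hmeas.nullMeasurableSet, Set.preimage_inter,
    f.preimage_closedBall, f.preimage_closedBall, f.symm_apply_apply, f.symm_apply_apply]

end InnerProductSpace

theorem volume_inter_ball_ge_of_rconvex_general {p : ℕ} (hp : 0 < p)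
    (𝒳 : Set (EuclideanSpace ℝ (Fin p)))
    (r : ℝ)
    (hrconv : ∀ x' ∈ frontier 𝒳, ∃ xt,
      x' ∈ Metric.closedBall xt r ∧ Metric.closedBall xt r ⊆ 𝒳)
    (rvec : EuclideanSpace ℝ (Fin p)) (hrvec : rvec = EuclideanSpace.single (⟨0, hp⟩ : Fin p) r)
    (ε : ℝ)
    (x : EuclideanSpace ℝ (Fin p)) (hx : x ∈ frontier 𝒳) :
    volume (Metric.closedBall (0 : EuclideanSpace ℝ (Fin p)) ε ∩ Metric.closedBall rvec r) ≤
      volume (𝒳 ∩ Metric.closedBall x ε) := by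
  obtain ⟨xt, hxt, hsub⟩ := hrconv x hx
  have hdist : dist x xt = r := dist_eq_of_mem_frontier_of_closedBall_subset hx hxt hsub
  have hdist_rvec : dist 0 rvec = dist x xt := by
    rw [hdist, hrvec, dist_zero_left, PiLp.norm_single, Real.norm_eq_abs,
      abs_of_nonneg (hdist ▸ dist_nonneg)]
  calc volume (closedBall 0 ε ∩ closedBall rvec r)
      = volume (closedBall x ε ∩ closedBall xt r) :=
        volume_closedBall_inter_closedBall_congr hdist_rvec ε r
    _ ≤ volume (𝒳 ∩ closedBall x ε) := measure_mono fun _ ⟨hyx, hyxt⟩ => ⟨hsub hyxt, hyx⟩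

/-- **Volume lower bound from r-convexity of the complement** (Lemma 8).
If the complement of `𝒳` is `r`-convex, then for any `ε ≥ 0` and boundary point
`x ∈ ∂𝒳`, the volume of `𝒳 ∩ closedBall x ε` is at least the volume of the
intersection of the two balls `closedBall 0 ε` and `closedBall r⃗ r`. -/
theorem volume_inter_ball_ge_of_rconvex {p : ℕ} (hp : 0 < p)
    (𝒳 : Set (EuclideanSpace ℝ (Fin p)))
    (r : ℝ) (hr : 0 < r)
    (hrconv : ∀ x' ∈ frontier 𝒳, ∃ xt,
      x' ∈ Metric.closedBall xt r ∧ Metric.closedBall xt r ⊆ 𝒳)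
    (rvec : EuclideanSpace ℝ (Fin p)) (hrvec : rvec = EuclideanSpace.single (⟨0, hp⟩ : Fin p) r)
    (ε : ℝ) (hε : 0 ≤ ε)
    (x : EuclideanSpace ℝ (Fin p)) (hx : x ∈ frontier 𝒳) :
    volume (Metric.closedBall (0 : EuclideanSpace ℝ (Fin p)) ε ∩ Metric.closedBall rvec r) ≤
      volume (𝒳 ∩ Metric.closedBall x ε) :=
  volume_inter_ball_ge_of_rconvex_general hp 𝒳 r hrconv rvec hrvec ε x hx
end

section
/- Let n ≥ 1 and let K ⊆ ℝ^n be a nonempty compact set. Then the convex hull of K equals the convex hull of its frontier: convexHull(K) = convexHull(∂K). -/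
/-!
Every point `x` of a compact set `K` lies on a segment between two frontier points: on a line
through `x` the trace of `K` is compact, and its extreme parameters cannot correspond to interior
points of `K`. Hence `K ⊆ convexHull (frontier K)`, while `frontier K ⊆ K` since `K` is closed.
-/

open Set

section LinePreimage

variable {X : Type*} [TopologicalSpace X] {f : ℝ → X} {K : Set X} {t : ℝ}

theorem mem_frontier_of_isGreatest_preimage (hf : Continuous f) (ht : IsGreatest (f ⁻¹' K) t) :
    f t ∈ frontier K := by
  refine (mem_frontier_iff_notMem_interior (s := K) ht.1).2 fun hint => lt_irrefl t ?_
  have : t ∈ interior (Iic t) :=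
    interior_mono ht.2 (preimage_interior_subset_interior_preimage hf hint)
  rwa [interior_Iic] at this

theorem mem_frontier_of_isLeast_preimage (hf : Continuous f) (ht : IsLeast (f ⁻¹' K) t) :
    f t ∈ frontier K := by
  refine (mem_frontier_iff_notMem_interior (s := K) ht.1).2 fun hint => lt_irrefl t ?_
  have : t ∈ interior (Ici t) :=
    interior_mono ht.2 (preimage_interior_subset_interior_preimage hf hint)
  rwa [interior_Ici] at this

end LinePreimage

section TopologicalVectorSpace

variable {E : Type*} [AddCommGroup E] [Module ℝ E] [TopologicalSpace E] [IsTopologicalAddGroup E]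
  [ContinuousSMul ℝ E] [T2Space E] {K : Set E}

theorem AffineMap.isClosedEmbedding_lineMap {x y : E} (hxy : x ≠ y) :
    Topology.IsClosedEmbedding (AffineMap.lineMap x y : ℝ → E) := by
  have := (Homeomorph.addRight x).isClosedEmbedding.comp
    (isClosedEmbedding_smul_left (𝕜 := ℝ) (sub_ne_zero.2 hxy.symm))
  convert this using 1
  ext t
  simp [AffineMap.lineMap_apply]

theorem IsCompact.exists_mem_segment_frontier [Nontrivial E] (hK : IsCompact K) {x : E}
    (hx : x ∈ K) : ∃ a ∈ frontier K, ∃ b ∈ frontier K, x ∈ segment ℝ a b := by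
  obtain ⟨y, hyx⟩ := exists_ne x
  set f : ℝ →ᵃ[ℝ] E := AffineMap.lineMap x y
  have hf := AffineMap.isClosedEmbedding_lineMap hyx.symm
  have htrace : IsCompact (f ⁻¹' K) := hf.isCompact_preimage hK
  have h0 : (0 : ℝ) ∈ f ⁻¹' K := by simpa [f] using hx
  obtain ⟨s, hs⟩ := htrace.exists_isLeast ⟨0, h0⟩
  obtain ⟨t, ht⟩ := htrace.exists_isGreatest ⟨0, h0⟩
  refine ⟨f s, mem_frontier_of_isLeast_preimage hf.continuous hs,
    f t, mem_frontier_of_isGreatest_preimage hf.continuous ht, ?_⟩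
  rw [← image_segment, segment_eq_Icc (hs.2 ht.1)]
  exact ⟨0, ⟨hs.2 h0, ht.2 h0⟩, by simp [f]⟩

theorem IsCompact.convexHull_frontier [Nontrivial E] (hK : IsCompact K) :
    convexHull ℝ (frontier K) = convexHull ℝ K := by
  refine (convexHull_mono hK.isClosed.frontier_subset).antisymm
    (convexHull_min (fun x hx => ?_) (convex_convexHull ℝ _))
  obtain ⟨a, ha, b, hb, hab⟩ := hK.exists_mem_segment_frontier hx
  exact (convex_convexHull ℝ _).segment_subset (subset_convexHull ℝ _ ha)
    (subset_convexHull ℝ _ hb) hab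

end TopologicalVectorSpace

theorem convexHull_eq_convexHull_frontier_general {n : ℕ} (hn : 1 ≤ n)
    (K : Set (EuclideanSpace ℝ (Fin n))) (hKc : IsCompact K) :
    convexHull ℝ K = convexHull ℝ (frontier K) := by
  have : Nontrivial (EuclideanSpace ℝ (Fin n)) :=
    Module.nontrivial_of_finrank_pos (R := ℝ) (by rw [finrank_euclideanSpace_fin]; omega)
  exact hKc.convexHull_frontier.symm

/-- **Convex hull of a compact set equals the convex hull of its frontier.**
For `n ≥ 1` and a nonempty compact `K ⊆ ℝ^n`, `convexHull K = convexHull (∂K)`. -/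
theorem convexHull_eq_convexHull_frontier {n : ℕ} (hn : 1 ≤ n)
    (K : Set (EuclideanSpace ℝ (Fin n))) (hKne : K.Nonempty) (hKc : IsCompact K) :
    convexHull ℝ K = convexHull ℝ (frontier K) :=
  convexHull_eq_convexHull_frontier_general hn K hKc
end

section
/- Let 𝒳 ⊆ ℝ^p be nonempty compact, f : ℝ^p → ℝ^n continuous, and 𝒴 = f(𝒳). Let (x_i)_{i≥1} be i.i.d. random variables with common law P_𝒳 satisfying P_𝒳(𝒳) = 1 and the boundary-positivity condition: for every y ∈ ∂𝒴 and every r > 0, P_𝒳({x ∈ 𝒳 : f(x) lies in the open ball of center y and radius r}) > 0. Let ε̄ ≥ 0 and let G¹, G² ⊆ ℝ^n be open sets such that ∂𝒴 ∩ (G¹ ⊕ closedBall(0, ε̄)) ≠ ∅ and ∂𝒴 ∩ (G² ⊕ closedBall(0, ε̄)) ≠ ∅, and set y_i = f(x_i). Then, with probability one, there exist infinitely many M ∈ ℕ such that y_{2M+1} ∈ G¹ ⊕ closedBall(0, ε̄) and y_{2M+2} ∈ G² ⊕ closedBall(0, ε̄). -/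
/-!
The events `A_M = {f (x_{2M+1}) ∈ G¹ ⊕ B̄(0, ε̄), f (x_{2M+2}) ∈ G² ⊕ B̄(0, ε̄)}` are built from
disjoint pairs of independent samples, so they are independent, and they all have the same
probability `P𝒳 (f⁻¹' (G¹ ⊕ B̄(0, ε̄))) · P𝒳 (f⁻¹' (G² ⊕ B̄(0, ε̄)))`. Both factors are positive:
each thickened set is open and contains a frontier point `y` of `f '' 𝒳`, hence a ball around `y`,
which is charged by the boundary-positivity condition. The second Borel–Cantelli lemma concludes.
-/

open Function MeasureTheory ProbabilityTheory Metric Filter Pointwise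

namespace ProbabilityTheory

variable {Ω ι κ β : Type*} {mΩ : MeasurableSpace Ω} {μ : Measure Ω}

lemma iIndep.iIndepSet_biInter {m : ι → MeasurableSpace Ω} (hle : ∀ i, m i ≤ mΩ)
    (hμ : iIndep m μ) {I : κ → Finset ι} (hI : Pairwise (Disjoint on I)) {s : ι → Set Ω}
    (hs : ∀ i, MeasurableSet[m i] (s i)) :
    iIndepSet (fun k ↦ ⋂ i ∈ I k, s i) μ := by
  classical
  refine (iIndepSet_iff_meas_biInter fun k ↦
    Finset.measurableSet_biInter _ fun i _ ↦ hle i _ (hs i)).2 fun S ↦ ?_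
  calc μ (⋂ k ∈ S, ⋂ i ∈ I k, s i) = μ (⋂ i ∈ S.biUnion I, s i) := by
        rw [Finset.set_biInter_biUnion]
    _ = ∏ i ∈ S.biUnion I, μ (s i) := hμ.meas_biInter fun i _ ↦ hs i
    _ = ∏ k ∈ S, μ (⋂ i ∈ I k, s i) := by
        rw [Finset.prod_biUnion (hI.set_pairwise _)]
        exact Finset.prod_congr rfl fun k _ ↦ (hμ.meas_biInter fun i _ ↦ hs i).symm

variable [MeasurableSpace β]

lemma iIndepFun.iIndepSet_preimage_pairs {X : ℕ → Ω → β} (hX : iIndepFun X μ)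
    (hXm : ∀ i, Measurable (X i)) {B₁ B₂ : Set β} (hB₁ : MeasurableSet B₁)
    (hB₂ : MeasurableSet B₂) :
    iIndepSet (fun M ↦ X (2 * M + 1) ⁻¹' B₁ ∩ X (2 * M + 2) ⁻¹' B₂) μ := by
  let B : ℕ → Set β := fun i ↦ if i % 2 = 1 then B₁ else B₂
  have hB : ∀ i, MeasurableSet (B i) := fun i ↦ by
    dsimp only [B]; split_ifs <;> assumption
  have hpairs : Pairwise (Disjoint on fun M ↦ ({2 * M + 1, 2 * M + 2} : Finset ℕ)) := by
    intro a b hab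
    simp only [onFun, Finset.disjoint_left, Finset.mem_insert, Finset.mem_singleton]
    omega
  convert hX.iIndep.iIndepSet_biInter (fun i ↦ (hXm i).comap_le) hpairs
    (s := fun i ↦ X i ⁻¹' B i) (fun i ↦ ⟨B i, hB i, rfl⟩) using 1
  funext M
  have hodd : (2 * M + 1) % 2 = 1 := by omega
  simp [B, hodd]

lemma iIndepFun.measure_preimage_inter_preimage {X : ι → Ω → β} (hX : iIndepFun X μ)
    (hXm : ∀ i, Measurable (X i)) {ν : Measure β} (hlaw : ∀ i, μ.map (X i) = ν) {i j : ι}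
    (hij : i ≠ j) {B₁ B₂ : Set β} (hB₁ : MeasurableSet B₁) (hB₂ : MeasurableSet B₂) :
    μ (X i ⁻¹' B₁ ∩ X j ⁻¹' B₂) = ν B₁ * ν B₂ := by
  rw [(hX.indepFun hij).measure_inter_preimage_eq_mul _ _ hB₁ hB₂,
    ← Measure.map_apply (hXm i) hB₁, ← Measure.map_apply (hXm j) hB₂, hlaw, hlaw]

lemma ae_frequently_mem_of_iIndepSet {s : ℕ → Set Ω} (hsm : ∀ n, MeasurableSet (s n))
    (hs : iIndepSet s μ) (hsum : ∑' n, μ (s n) = ⊤) :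
    ∀ᵐ ω ∂μ, ∃ᶠ n in atTop, ω ∈ s n := by
  have := hs.isProbabilityMeasure
  have hlimsup : ∀ᵐ ω ∂μ, ω ∈ limsup s atTop := by
    rw [ae_mem_iff_measure_eq (MeasurableSet.measurableSet_limsup hsm).nullMeasurableSet,
      measure_limsup_eq_one hsm hs hsum, measure_univ]
  filter_upwards [hlimsup] with ω hω using mem_limsup_iff_frequently_mem.1 hω

end ProbabilityTheory

lemma measure_preimage_pos_of_inter_nonempty {α γ : Type*} [MeasurableSpace α]
    [PseudoMetricSpace γ] {ν : Measure α} {f : α → γ} {K : Set α} {S T : Set γ}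
    (hS : ∀ y ∈ S, ∀ r > 0, 0 < ν {x ∈ K | f x ∈ ball y r}) (hT : IsOpen T)
    (hST : (S ∩ T).Nonempty) : 0 < ν (f ⁻¹' T) := by
  obtain ⟨y, hyS, hyT⟩ := hST
  obtain ⟨r, hr, hball⟩ := Metric.isOpen_iff.1 hT y hyT
  exact (hS y hyS r hr).trans_le (measure_mono fun x' hx' ↦ hball hx'.2)

theorem infinitely_often_paired_samples_general {p n : ℕ}
    (𝒳 : Set (EuclideanSpace ℝ (Fin p)))
    (f : EuclideanSpace ℝ (Fin p) → EuclideanSpace ℝ (Fin n)) (hf : Continuous f)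
    {Ω : Type*} [MeasureSpace Ω]
    (x : ℕ → Ω → EuclideanSpace ℝ (Fin p)) (hxmeas : ∀ i, Measurable (x i))
    (P𝒳 : Measure (EuclideanSpace ℝ (Fin p)))
    (hlaw : ∀ i, Measure.map (x i) ℙ = P𝒳)
    (hindep : iIndepFun x ℙ)
    (hbd : ∀ y ∈ frontier (f '' 𝒳), ∀ r > 0,
      0 < P𝒳 {x' ∈ 𝒳 | f x' ∈ Metric.ball y r})
    (εbar : ℝ)
    (G₁ G₂ : Set (EuclideanSpace ℝ (Fin n))) (hG₁ : IsOpen G₁) (hG₂ : IsOpen G₂)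
    (hG₁ne : (frontier (f '' 𝒳) ∩
      (G₁ + Metric.closedBall (0 : EuclideanSpace ℝ (Fin n)) εbar)).Nonempty)
    (hG₂ne : (frontier (f '' 𝒳) ∩
      (G₂ + Metric.closedBall (0 : EuclideanSpace ℝ (Fin n)) εbar)).Nonempty) :
    ∀ᵐ ω ∂ℙ, ∀ N : ℕ, ∃ M ≥ N,
      f (x (2 * M + 1) ω) ∈ G₁ + Metric.closedBall (0 : EuclideanSpace ℝ (Fin n)) εbar ∧
      f (x (2 * M + 2) ω) ∈ G₂ + Metric.closedBall (0 : EuclideanSpace ℝ (Fin n)) εbar := by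
  set T₁ := G₁ + closedBall (0 : EuclideanSpace ℝ (Fin n)) εbar
  set T₂ := G₂ + closedBall (0 : EuclideanSpace ℝ (Fin n)) εbar
  have hT₁ : IsOpen T₁ := hG₁.add_right
  have hT₂ : IsOpen T₂ := hG₂.add_right
  have hB₁ : MeasurableSet (f ⁻¹' T₁) := hT₁.measurableSet.preimage hf.measurable
  have hB₂ : MeasurableSet (f ⁻¹' T₂) := hT₂.measurableSet.preimage hf.measurable
  have hpos : P𝒳 (f ⁻¹' T₁) * P𝒳 (f ⁻¹' T₂) ≠ 0 :=
    mul_ne_zero (measure_preimage_pos_of_inter_nonempty hbd hT₁ hG₁ne).ne'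
      (measure_preimage_pos_of_inter_nonempty hbd hT₂ hG₂ne).ne'
  have hsum : ∑' M, ℙ (x (2 * M + 1) ⁻¹' (f ⁻¹' T₁) ∩ x (2 * M + 2) ⁻¹' (f ⁻¹' T₂)) = ⊤ := by
    rw [tsum_congr fun M ↦
      hindep.measure_preimage_inter_preimage hxmeas hlaw (by omega) hB₁ hB₂]
    exact ENNReal.tsum_const_eq_top_of_ne_zero hpos
  filter_upwards [ae_frequently_mem_of_iIndepSet
    (fun M ↦ ((hxmeas _) hB₁).inter ((hxmeas _) hB₂))
    (hindep.iIndepSet_preimage_pairs hxmeas hB₁ hB₂) hsum] with ω hω N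
  exact frequently_atTop.1 hω N

/-- **Infinitely-often sampling near two boundary-intersecting open sets** (step C2.1).
If `G¹ ⊕ closedBall 0 ε̄` and `G² ⊕ closedBall 0 ε̄` both meet the frontier of the
reachable set, then with probability one there are infinitely many `M` with
`y_{2M+1} ∈ G¹ ⊕ closedBall 0 ε̄` and `y_{2M+2} ∈ G² ⊕ closedBall 0 ε̄`. -/
theorem infinitely_often_paired_samples {p n : ℕ}
    (𝒳 : Set (EuclideanSpace ℝ (Fin p))) (h𝒳ne : 𝒳.Nonempty) (h𝒳c : IsCompact 𝒳)
    (f : EuclideanSpace ℝ (Fin p) → EuclideanSpace ℝ (Fin n)) (hf : Continuous f)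
    {Ω : Type*} [MeasureSpace Ω] [IsProbabilityMeasure (ℙ : Measure Ω)]
    (x : ℕ → Ω → EuclideanSpace ℝ (Fin p)) (hxmeas : ∀ i, Measurable (x i))
    (P𝒳 : Measure (EuclideanSpace ℝ (Fin p))) [IsProbabilityMeasure P𝒳]
    (hlaw : ∀ i, Measure.map (x i) ℙ = P𝒳)
    (hindep : iIndepFun x ℙ)
    (hsupp : P𝒳 𝒳 = 1)
    (hbd : ∀ y ∈ frontier (f '' 𝒳), ∀ r > 0,
      0 < P𝒳 {x' ∈ 𝒳 | f x' ∈ Metric.ball y r})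
    (εbar : ℝ) (hεbar : 0 ≤ εbar)
    (G₁ G₂ : Set (EuclideanSpace ℝ (Fin n))) (hG₁ : IsOpen G₁) (hG₂ : IsOpen G₂)
    (hG₁ne : (frontier (f '' 𝒳) ∩
      (G₁ + Metric.closedBall (0 : EuclideanSpace ℝ (Fin n)) εbar)).Nonempty)
    (hG₂ne : (frontier (f '' 𝒳) ∩
      (G₂ + Metric.closedBall (0 : EuclideanSpace ℝ (Fin n)) εbar)).Nonempty) :
    ∀ᵐ ω ∂ℙ, ∀ N : ℕ, ∃ M ≥ N,
      f (x (2 * M + 1) ω) ∈ G₁ + Metric.closedBall (0 : EuclideanSpace ℝ (Fin n)) εbar ∧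
      f (x (2 * M + 2) ω) ∈ G₂ + Metric.closedBall (0 : EuclideanSpace ℝ (Fin n)) εbar :=
  infinitely_often_paired_samples_general 𝒳 f hf x hxmeas P𝒳 hlaw hindep hbd εbar G₁ G₂ hG₁ hG₂
    hG₁ne hG₂ne
end

section
/- Let X ⊆ ℝ^n be a convex set, and let A_1, …, A_N be finitely many closed convex subsets of ℝ^n whose union contains X. Let f : ℝ^n → ℝ^m be continuous on X, and suppose that for each i = 1, …, N there is an affine map g_i(x) = W_i x + b_i (with W_i a linear map and b_i ∈ ℝ^m) such that f(x) = g_i(x) for all x ∈ A_i ∩ X. Set L = max_{i=1,…,N} ‖W_i‖, the maximum of the operator norms of the linear parts. Then f is L-Lipschitz on X: ‖f(x₁) − f(x₂)‖ ≤ L‖x₁ − x₂‖ for all x₁, x₂ ∈ X. -/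
/-- **Piecewise-affine functions are Lipschitz with the max of the slopes.**
If `X` is convex, covered by closed convex sets `A_1, …, A_N`, the map `f` is continuous
on `X` and agrees on each `A_i ∩ X` with the affine map `x ↦ W_i x + b_i`, then `f` is
`L`-Lipschitz on `X` with `L = max_i ‖W_i‖`. -/
theorem piecewise_affine_lipschitz {n m N : ℕ}
    (X : Set (EuclideanSpace ℝ (Fin n))) (hX : Convex ℝ X)
    (A : Fin N → Set (EuclideanSpace ℝ (Fin n)))
    (hAclosed : ∀ i, IsClosed (A i)) (hAconv : ∀ i, Convex ℝ (A i))
    (hcov : X ⊆ ⋃ i, A i)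
    (f : EuclideanSpace ℝ (Fin n) → EuclideanSpace ℝ (Fin m))
    (hf : ContinuousOn f X)
    (W : Fin N → EuclideanSpace ℝ (Fin n) →L[ℝ] EuclideanSpace ℝ (Fin m))
    (b : Fin N → EuclideanSpace ℝ (Fin m))
    (haff : ∀ i, ∀ x ∈ A i ∩ X, f x = W i x + b i)
    (L : ℝ) (hL : L = ⨆ i, ‖W i‖) :
    ∀ x₁ ∈ X, ∀ x₂ ∈ X, ‖f x₁ - f x₂‖ ≤ L * ‖x₁ - x₂‖ := by
  intro x₁ hx₁ x₂ hx₂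
  classical
  have hNE : Nonempty (Fin N) := by
    obtain ⟨i, -⟩ := Set.mem_iUnion.1 (hcov hx₁); exact ⟨i⟩
  have hbdd : BddAbove (Set.range fun i => ‖W i‖) :=
    Set.Finite.bddAbove (Set.finite_range _)
  have hWle : ∀ i, ‖W i‖ ≤ L := by
    intro i; rw [hL]; exact le_ciSup hbdd i
  have hLnn : 0 ≤ L := le_trans (norm_nonneg _) (hWle hNE.some)
  set v : EuclideanSpace ℝ (Fin n) := x₂ - x₁ with hv
  set C : ℝ := L * ‖v‖ with hCdef
  have hCnn : 0 ≤ C := mul_nonneg hLnn (norm_nonneg _)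
  set γ : ℝ → EuclideanSpace ℝ (Fin n) := fun t => x₁ + t • v with hγ
  have hγcont : Continuous γ := continuous_const.add (continuous_id.smul continuous_const)
  have hγX : ∀ t ∈ Set.Icc (0:ℝ) 1, γ t ∈ X := by
    intro t ht
    have heq : γ t = (1 - t) • x₁ + t • x₂ := by
      simp only [hγ, hv]; module
    rw [heq]
    exact hX hx₁ hx₂ (by linarith [ht.2]) ht.1 (by ring)
  set S : Set ℝ := {t : ℝ | t ∈ Set.Icc (0:ℝ) 1 ∧ ‖f (γ t) - f x₁‖ ≤ C * t} with hS
  have h0S : (0:ℝ) ∈ S := by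
    refine ⟨⟨le_refl 0, zero_le_one⟩, ?_⟩
    simp [hγ]
  have hSbdd : BddAbove S := ⟨1, fun t ht => ht.1.2⟩
  set T := sSup S with hT
  have hTmem : T ∈ Set.Icc (0:ℝ) 1 :=
    ⟨le_csSup hSbdd h0S, csSup_le ⟨0, h0S⟩ fun t ht => ht.1.2⟩
  have hScl : IsClosed S := by
    have hco : ContinuousOn (fun t => ‖f (γ t) - f x₁‖ - C * t) (Set.Icc (0:ℝ) 1) := by
      apply ContinuousOn.sub
      · exact ((hf.comp hγcont.continuousOn hγX).sub continuousOn_const).norm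
      · exact (continuous_const.mul continuous_id).continuousOn
    have hEq : S = Set.Icc (0:ℝ) 1 ∩ (fun t => ‖f (γ t) - f x₁‖ - C * t) ⁻¹' Set.Iic 0 := by
      ext t
      simp only [hS, Set.mem_setOf_eq, Set.mem_inter_iff, Set.mem_preimage, Set.mem_Iic,
        sub_nonpos]
    rw [hEq]
    exact hco.preimage_isClosed_of_isClosed isClosed_Icc isClosed_Iic
  have hTS : T ∈ S := hScl.csSup_mem ⟨0, h0S⟩ hSbdd
  -- key step lemma: within one piece, Lipschitz estimate
  have hkey : ∀ j : Fin N, ∀ s t : ℝ, s ∈ Set.Icc (0:ℝ) 1 → t ∈ Set.Icc (0:ℝ) 1 →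
      γ s ∈ A j → γ t ∈ A j → ‖f (γ t) - f (γ s)‖ ≤ C * |t - s| := by
    intro j s t hs ht hsA htA
    rw [haff j (γ t) ⟨htA, hγX t ht⟩, haff j (γ s) ⟨hsA, hγX s hs⟩]
    have hγd : γ t - γ s = (t - s) • v := by
      simp only [hγ]; module
    have heq : (W j (γ t) + b j) - (W j (γ s) + b j) = W j ((t - s) • v) := by
      rw [← hγd, map_sub]; abel
    rw [heq, map_smul, norm_smul]
    simp only [Real.norm_eq_abs]
    calc |t - s| * ‖W j v‖ ≤ |t - s| * (‖W j‖ * ‖v‖) := by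
          exact mul_le_mul_of_nonneg_left ((W j).le_opNorm v) (abs_nonneg _)
      _ ≤ |t - s| * (L * ‖v‖) := by
          exact mul_le_mul_of_nonneg_left
            (mul_le_mul_of_nonneg_right (hWle j) (norm_nonneg _)) (abs_nonneg _)
      _ = C * |t - s| := by rw [hCdef]; ring
  have hT1 : T = 1 := by
    by_contra h
    have hTlt : T < 1 := lt_of_le_of_ne hTmem.2 h
    have hsub : Set.Ioc T 1 ⊆ ⋃ i, (γ ⁻¹' A i ∩ Set.Ioc T 1) := by
      intro t ht
      have htIcc : t ∈ Set.Icc (0:ℝ) 1 := ⟨le_trans hTmem.1 (le_of_lt ht.1), ht.2⟩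
      obtain ⟨i, hi⟩ := Set.mem_iUnion.1 (hcov (hγX t htIcc))
      exact Set.mem_iUnion.2 ⟨i, hi, ht⟩
    have hTcl : T ∈ closure (⋃ i, (γ ⁻¹' A i ∩ Set.Ioc T 1)) := by
      apply closure_mono hsub
      rw [closure_Ioc (ne_of_lt hTlt)]
      exact ⟨le_refl T, le_of_lt hTlt⟩
    rw [closure_iUnion_of_finite] at hTcl
    obtain ⟨j, hj⟩ := Set.mem_iUnion.1 hTcl
    have hTBj : T ∈ γ ⁻¹' A j :=
      closure_minimal Set.inter_subset_left ((hAclosed j).preimage hγcont) hj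
    obtain ⟨t, htBj, htIoc⟩ := closure_nonempty_iff.1 ⟨T, hj⟩
    have htIcc : t ∈ Set.Icc (0:ℝ) 1 := ⟨le_trans hTmem.1 (le_of_lt htIoc.1), htIoc.2⟩
    have htS : t ∈ S := by
      refine ⟨htIcc, ?_⟩
      calc ‖f (γ t) - f x₁‖ ≤ ‖f (γ t) - f (γ T)‖ + ‖f (γ T) - f x₁‖ :=
            norm_sub_le_norm_sub_add_norm_sub _ _ _
        _ ≤ C * |t - T| + C * T := add_le_add (hkey j T t hTmem htIcc hTBj htBj) hTS.2
        _ = C * t := by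
            rw [abs_of_nonneg (by linarith [htIoc.1] : (0:ℝ) ≤ t - T)]; ring
    exact absurd (le_csSup hSbdd htS) (not_le.2 htIoc.1)
  have hγ1 : γ 1 = x₂ := by simp only [hγ, hv, one_smul]; abel
  have := hTS.2
  rw [hT1, hγ1, mul_one] at this
  calc ‖f x₁ - f x₂‖ = ‖f x₂ - f x₁‖ := norm_sub_rev _ _
    _ ≤ C := this
    _ = L * ‖x₁ - x₂‖ := by rw [hCdef, hv, norm_sub_rev]
end
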